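/- arXiv:2209.01584 — 6 statements merged into one kernel-verified Lean document; each statement's English description precedes it below -/
import Mathlib

section
/- Let ε, δ ∈ (0,1] be reals and let n, m, k, r be positive integers with n ≥ m ≥ k and binom(m,k) ≥ (3r/ε²)·ln(2rn/δ). Then there exists an (ε,δ,m)-balanced coloring γ : C([n],k) → [r]. -/
/-! A uniformly random coloring works. Fix a set `A` with `|A| ≥ m`. Each color class restricted
to the `binom(|A|, k)` subsets of `A` has binomial size, so by the Chernoff bound (with the
exponential moment `t = log (1 ± ε)`) the set `A` fails to be `ε`-balanced with probability at most
`2r · exp(-ε² binom(m,k) / (3r)) ≤ δ / n`. Hence the expectation over colorings of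
`∑_{ℓ = m}^{n}` (fraction of unbalanced `ℓ`-sets) is at most `(n - m + 1) δ / n ≤ δ`, and some
coloring has each of these fractions at most `δ`. Probabilities are phrased as counts among all
`r ^ binom(n, k)` colorings. -/

open Finset Real

/-- The coloring `γ` of the `k`-element subsets of `{1,…,n}` with `r` colors is
`ε`-balanced on `A`. -/
def EpsBalancedOn {n k r : ℕ} (γ : {S : Finset (Fin n) // S.card = k} → Fin r) (ε : ℝ)
    (A : Finset (Fin n)) : Prop :=
  ∀ i : Fin r,
    ((1 - ε) / r) * (A.card.choose k : ℝ) ≤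
      (Nat.card {S : {S : Finset (Fin n) // S.card = k} // γ S = i ∧ S.1 ⊆ A} : ℝ) ∧
    (Nat.card {S : {S : Finset (Fin n) // S.card = k} // γ S = i ∧ S.1 ⊆ A} : ℝ) ≤
      ((1 + ε) / r) * (A.card.choose k : ℝ)

/-- `γ` is `(ε,δ,m)`-balanced: for each `ℓ ∈ {m,…,n}`, a uniformly random `ℓ`-element
subset of `{1,…,n}` is `ε`-balanced for `γ` with probability at least `1 - δ`. -/
def IsBalancedColoring {n k r : ℕ} (m : ℕ) (ε δ : ℝ)
    (γ : {S : Finset (Fin n) // S.card = k} → Fin r) : Prop :=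
  ∀ ℓ : ℕ, m ≤ ℓ → ℓ ≤ n →
    (1 - δ) * (n.choose ℓ : ℝ) ≤
      (Nat.card {A : Finset (Fin n) // A.card = ℓ ∧ EpsBalancedOn γ ε A} : ℝ)

theorem sub_inv_div_two_le_log {u : ℝ} (hu0 : 0 < u) (hu1 : u ≤ 1) : (u - u⁻¹) / 2 ≤ log u := by
  rw [← sinh_log hu0]
  exact sinh_le_self_iff.2 (log_nonpos hu0.le hu1)

theorem add_sq_div_three_le_one_add_mul_log {ε : ℝ} (hε0 : 0 ≤ ε) (hε1 : ε ≤ 1) :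
    ε + ε ^ 2 / 3 ≤ (1 + ε) * log (1 + ε) := by
  have h := mul_le_mul_of_nonneg_left (le_log_one_add_of_nonneg hε0) (by linarith : 0 ≤ 1 + ε)
  refine le_trans ?_ h
  rw [mul_div_assoc', le_div_iff₀ (by linarith)]
  nlinarith [mul_nonneg (sq_nonneg ε) (sub_nonneg.2 hε1)]

theorem sq_div_two_sub_le_one_sub_mul_log {ε : ℝ} (hε0 : 0 ≤ ε) (hε1 : ε < 1) :
    ε ^ 2 / 2 - ε ≤ (1 - ε) * log (1 - ε) := by
  have hu : 0 < 1 - ε := by linarith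
  have h := mul_le_mul_of_nonneg_left (sub_inv_div_two_le_log hu (by linarith)) hu.le
  refine le_trans (le_of_eq ?_) h
  field_simp
  ring

section Chernoff

variable {ι : Type*} [Fintype ι] [DecidableEq ι] {r : ℕ}

theorem sum_exp_mul_card_filter_eq (D : Finset ι) (i : Fin r) (t : ℝ) :
    ∑ f : ι → Fin r, exp (t * #{x ∈ D | f x = i}) =
      r ^ (Fintype.card ι - #D) * (r - 1 + exp t) ^ #D := by
  have hterm (f : ι → Fin r) :
      exp (t * #{x ∈ D | f x = i}) = ∏ x, if x ∈ D ∧ f x = i then exp t else 1 := by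
    rw [prod_ite, prod_const, prod_const_one, mul_one, mul_comm, exp_nat_mul]
    congr 2
    ext x
    simp
  have hcol (x : ι) : (∑ c : Fin r, if x ∈ D ∧ c = i then exp t else 1) =
      if x ∈ D then (r - 1 + exp t : ℝ) else r := by
    by_cases hx : x ∈ D
    · simp only [hx, true_and, if_true]
      rw [Fintype.sum_eq_add_sum_compl i, if_pos rfl,
        sum_congr rfl fun c hc => if_neg (by simpa using hc)]
      simp only [sum_const, card_compl, Fintype.card_fin, card_singleton, nsmul_eq_mul,
        Nat.cast_sub i.pos, Nat.cast_one, mul_one]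
      ring
    · simp [hx]
  simp_rw [hterm]
  rw [← Fintype.prod_sum fun x c => if x ∈ D ∧ c = i then exp t else 1]
  simp_rw [hcol]
  rw [prod_ite, prod_const, prod_const, filter_mem_eq_inter, univ_inter, filter_not,
    filter_mem_eq_inter, univ_inter, card_univ_sdiff, mul_comm]

theorem sum_exp_mul_card_filter_le (D : Finset ι) (i : Fin r) (t : ℝ) :
    ∑ f : ι → Fin r, exp (t * #{x ∈ D | f x = i}) ≤
      r ^ Fintype.card ι * exp ((exp t - 1) * #D / r) := by
  have hr : (0 : ℝ) < r := by exact_mod_cast i.pos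
  have hbase : (r - 1 + exp t : ℝ) ≤ r * exp ((exp t - 1) / r) := by
    have := add_one_le_exp ((exp t - 1) / r)
    calc (r - 1 + exp t : ℝ) = r * ((exp t - 1) / r + 1) := by field_simp; ring
      _ ≤ _ := by gcongr
  have hD : #D ≤ Fintype.card ι := card_le_univ D
  calc ∑ f : ι → Fin r, exp (t * #{x ∈ D | f x = i})
      = r ^ (Fintype.card ι - #D) * (r - 1 + exp t) ^ #D := sum_exp_mul_card_filter_eq D i t
    _ ≤ r ^ (Fintype.card ι - #D) * (r * exp ((exp t - 1) / r)) ^ #D := by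
      have : (0 : ℝ) ≤ r - 1 + exp t := by
        linarith [exp_pos t, (by exact_mod_cast i.pos : (1 : ℝ) ≤ r)]
      gcongr
    _ = r ^ Fintype.card ι * exp ((exp t - 1) * #D / r) := by
      rw [mul_pow, ← mul_assoc, ← pow_add, Nat.sub_add_cancel hD, ← exp_nat_mul]
      ring_nf

theorem chernoff_card_le (D : Finset ι) (i : Fin r) (t a : ℝ) :
    (#{f : ι → Fin r | t * a ≤ t * #{x ∈ D | f x = i}} : ℝ) ≤
      r ^ Fintype.card ι * exp ((exp t - 1) * #D / r - t * a) := by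
  rw [exp_sub, mul_div_assoc', le_div_iff₀ (exp_pos _)]
  calc (#{f : ι → Fin r | t * a ≤ t * #{x ∈ D | f x = i}} : ℝ) * exp (t * a)
      = ∑ f : ι → Fin r with t * a ≤ t * #{x ∈ D | f x = i}, exp (t * a) := by
        rw [sum_const, nsmul_eq_mul]
    _ ≤ ∑ f : ι → Fin r with t * a ≤ t * #{x ∈ D | f x = i}, exp (t * #{x ∈ D | f x = i}) :=
        sum_le_sum fun f hf => exp_le_exp.2 (mem_filter.1 hf).2
    _ ≤ ∑ f : ι → Fin r, exp (t * #{x ∈ D | f x = i}) :=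
        sum_le_sum_of_subset_of_nonneg (filter_subset _ _) fun _ _ _ => (exp_pos _).le
    _ ≤ _ := sum_exp_mul_card_filter_le D i t

theorem card_color_class_gt_le (D : Finset ι) (i : Fin r) {ε : ℝ} (hε0 : 0 ≤ ε) (hε1 : ε ≤ 1) :
    (#{f : ι → Fin r | (1 + ε) / r * #D < #{x ∈ D | f x = i}} : ℝ) ≤
      r ^ Fintype.card ι * exp (-(ε ^ 2 * #D / (3 * r))) := by
  set t := log (1 + ε)
  have hexp : exp t = 1 + ε := exp_log (by linarith)
  have hsub : ({f : ι → Fin r | (1 + ε) / r * #D < #{x ∈ D | f x = i}} : Finset _) ⊆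
      ({f : ι → Fin r | t * ((1 + ε) / r * #D) ≤ t * #{x ∈ D | f x = i}} : Finset _) :=
    monotone_filter_right _ fun f _ hf =>
      mul_le_mul_of_nonneg_left hf.le (log_nonneg (by linarith))
  refine (Nat.cast_le.2 (card_le_card hsub)).trans ?_
  refine (chernoff_card_le D i t _).trans ?_
  gcongr
  rw [hexp]
  have hD : (0 : ℝ) ≤ #D / r := by positivity
  have key := mul_le_mul_of_nonneg_right (add_sq_div_three_le_one_add_mul_log hε0 hε1) hD
  calc (1 + ε - 1) * #D / r - t * ((1 + ε) / r * #D) = (ε - (1 + ε) * t) * (#D / r) := by ring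
    _ ≤ -(ε ^ 2 / 3) * (#D / r) := by linarith
    _ = _ := by ring

theorem card_color_class_lt_le (D : Finset ι) (i : Fin r) {ε : ℝ} (hε0 : 0 ≤ ε) (hε1 : ε ≤ 1) :
    (#{f : ι → Fin r | #{x ∈ D | f x = i} < (1 - ε) / r * #D} : ℝ) ≤
      r ^ Fintype.card ι * exp (-(ε ^ 2 * #D / (3 * r))) := by
  obtain rfl | hε1 := hε1.eq_or_lt
  · rw [filter_false_of_mem fun f _ => by simp]
    simp only [card_empty, Nat.cast_zero]
    positivity
  set t := log (1 - ε)
  have hexp : exp t = 1 - ε := exp_log (by linarith)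
  have hsub : ({f : ι → Fin r | #{x ∈ D | f x = i} < (1 - ε) / r * #D} : Finset _) ⊆
      ({f : ι → Fin r | t * ((1 - ε) / r * #D) ≤ t * #{x ∈ D | f x = i}} : Finset _) :=
    monotone_filter_right _ fun f _ hf =>
      mul_le_mul_of_nonpos_left hf.le (log_nonpos (by linarith) (by linarith))
  refine (Nat.cast_le.2 (card_le_card hsub)).trans ?_
  refine (chernoff_card_le D i t _).trans ?_
  gcongr
  rw [hexp]
  have hD : (0 : ℝ) ≤ #D / r := by positivity
  have key := mul_le_mul_of_nonneg_right (sq_div_two_sub_le_one_sub_mul_log hε0 hε1) hD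
  calc (1 - ε - 1) * #D / r - t * ((1 - ε) / r * #D) = (-ε - (1 - ε) * t) * (#D / r) := by ring
    _ ≤ -(ε ^ 2 / 3) * (#D / r) := by linarith [mul_nonneg (sq_nonneg ε) hD]
    _ = _ := by ring

end Chernoff

theorem card_filter_subset_eq_choose {α : Type*} [Fintype α] [DecidableEq α] (k : ℕ)
    (A : Finset α) : #{S : {S : Finset α // S.card = k} | S.1 ⊆ A} = (#A).choose k := by
  rw [← card_powersetCard, ← card_map (Function.Embedding.subtype _)]
  congr 1
  ext B
  simp [mem_powersetCard, and_comm]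

theorem exists_forall_card_filter_le {Γ α κ : Type*} [Fintype Γ] [Nonempty Γ] (S : Finset κ)
    (U : κ → Finset α) (bad : Γ → α → Prop) [∀ γ a, Decidable (bad γ a)] {q δ : ℝ}
    (hq0 : 0 ≤ q) (hq : ∀ ℓ ∈ S, ∀ a ∈ U ℓ, (#{γ | bad γ a} : ℝ) ≤ q * Fintype.card Γ)
    (hδ : #S * q ≤ δ) :
    ∃ γ, ∀ ℓ ∈ S, (#{a ∈ U ℓ | bad γ a} : ℝ) ≤ δ * #(U ℓ) := by
  set G : Γ → ℝ := fun γ => ∑ ℓ ∈ S, (#{a ∈ U ℓ | bad γ a} : ℝ) / #(U ℓ)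
  have hsum : ∑ γ, G γ ≤ ∑ _γ : Γ, δ := by
    have hdouble (ℓ : κ) : ∑ γ, (#{a ∈ U ℓ | bad γ a} : ℝ) = ∑ a ∈ U ℓ, (#{γ | bad γ a} : ℝ) := by
      exact_mod_cast sum_card_bipartiteAbove_eq_sum_card_bipartiteBelow bad
    calc ∑ γ, G γ = ∑ ℓ ∈ S, (∑ a ∈ U ℓ, (#{γ | bad γ a} : ℝ)) / #(U ℓ) := by
          simp only [G]
          rw [sum_comm]
          simp_rw [← sum_div, hdouble]
      _ ≤ ∑ _ℓ ∈ S, q * Fintype.card Γ := by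
          refine sum_le_sum fun ℓ hℓ => div_le_of_le_mul₀ (by positivity) (by positivity) ?_
          calc ∑ a ∈ U ℓ, (#{γ | bad γ a} : ℝ) ≤ ∑ _a ∈ U ℓ, q * Fintype.card Γ :=
                sum_le_sum (hq ℓ hℓ)
            _ = _ := by rw [sum_const, nsmul_eq_mul, mul_comm]
      _ ≤ ∑ _γ : Γ, δ := by
          rw [sum_const, sum_const, nsmul_eq_mul, nsmul_eq_mul, card_univ, ← mul_assoc,
            mul_comm (Fintype.card Γ : ℝ)]
          gcongr
  obtain ⟨γ, -, hγ⟩ := exists_le_of_sum_le univ_nonempty hsum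
  refine ⟨γ, fun ℓ hℓ => ?_⟩
  have hterm : (#{a ∈ U ℓ | bad γ a} : ℝ) / #(U ℓ) ≤ δ :=
    (single_le_sum (f := fun ℓ => (#{a ∈ U ℓ | bad γ a} : ℝ) / #(U ℓ))
      (fun _ _ => by positivity) hℓ).trans hγ
  rcases (U ℓ).eq_empty_or_nonempty with hU | hU
  · simp [hU]
  · rwa [div_le_iff₀ (by exact_mod_cast hU.card_pos)] at hterm

theorem isBalancedColoring_of_card_filter_not_le {n k r m : ℕ} {ε δ : ℝ}
    (γ : {S : Finset (Fin n) // S.card = k} → Fin r) [DecidablePred (EpsBalancedOn γ ε)]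
    (h : ∀ ℓ, m ≤ ℓ → ℓ ≤ n → (#{A ∈ powersetCard ℓ univ | ¬EpsBalancedOn γ ε A} : ℝ) ≤
      δ * #(powersetCard ℓ (univ : Finset (Fin n)))) :
    IsBalancedColoring m ε δ γ := by
  intro ℓ hmℓ hℓn
  have hsplit := card_filter_add_card_filter_not (s := powersetCard ℓ (univ : Finset (Fin n)))
    (EpsBalancedOn γ ε)
  have hgood : Nat.card {A : Finset (Fin n) // A.card = ℓ ∧ EpsBalancedOn γ ε A} =
      #{A ∈ powersetCard ℓ univ | EpsBalancedOn γ ε A} := by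
    rw [Nat.card_eq_fintype_card, Fintype.card_subtype]
    congr 1
    ext A
    simp
  have hbad := h ℓ hmℓ hℓn
  rw [card_powersetCard, card_univ, Fintype.card_fin] at hsplit hbad
  rw [hgood, ← hsplit]
  rw [← hsplit] at hbad
  push_cast at hbad ⊢
  linarith

theorem card_not_epsBalancedOn_le {n k r : ℕ} {ε : ℝ} (hε0 : 0 ≤ ε) (hε1 : ε ≤ 1)
    (A : Finset (Fin n))
    [DecidablePred fun γ : {S : Finset (Fin n) // S.card = k} → Fin r => EpsBalancedOn γ ε A] :
    (#{γ : {S : Finset (Fin n) // S.card = k} → Fin r | ¬EpsBalancedOn γ ε A} : ℝ) ≤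
      r ^ Fintype.card {S : Finset (Fin n) // S.card = k} *
        (2 * r * exp (-(ε ^ 2 * (#A).choose k / (3 * r)))) := by
  set D : Finset {S : Finset (Fin n) // S.card = k} := {S | S.1 ⊆ A}
  have hD : #D = (#A).choose k := card_filter_subset_eq_choose k A
  set L : Fin r → Finset ({S : Finset (Fin n) // S.card = k} → Fin r) :=
    fun i => {γ | #{S ∈ D | γ S = i} < (1 - ε) / r * #D}
  set H : Fin r → Finset ({S : Finset (Fin n) // S.card = k} → Fin r) :=
    fun i => {γ | (1 + ε) / r * #D < #{S ∈ D | γ S = i}}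
  have hsub : ({γ | ¬EpsBalancedOn γ ε A} : Finset _) ⊆ univ.biUnion fun i => L i ∪ H i := by
    intro γ hγ
    simp only [mem_filter, mem_univ, true_and, EpsBalancedOn, not_forall] at hγ
    obtain ⟨i, hi⟩ := hγ
    have hcount : Nat.card {S // γ S = i ∧ S.1 ⊆ A} = #{S ∈ D | γ S = i} := by
      rw [Nat.card_eq_fintype_card, Fintype.card_subtype, filter_filter]
      congr 1
      ext S
      simp [and_comm]
    rw [hcount, ← hD] at hi
    simp only [mem_biUnion, mem_univ, true_and, mem_union, L, H, mem_filter]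
    refine ⟨i, ?_⟩
    by_contra! hin
    exact hi ⟨hin.1, hin.2⟩
  calc (#{γ : {S : Finset (Fin n) // S.card = k} → Fin r | ¬EpsBalancedOn γ ε A} : ℝ)
      ≤ ∑ i, ((#(L i) : ℝ) + #(H i)) := by
        exact_mod_cast (card_le_card hsub).trans
          (card_biUnion_le.trans (sum_le_sum fun i _ => card_union_le _ _))
    _ ≤ ∑ _i : Fin r, 2 * (r ^ Fintype.card {S : Finset (Fin n) // S.card = k} *
          exp (-(ε ^ 2 * #D / (3 * r)))) :=
        sum_le_sum fun i _ => by
          linarith [card_color_class_lt_le D i hε0 hε1, card_color_class_gt_le D i hε0 hε1]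
    _ = _ := by
        rw [sum_const, card_univ, Fintype.card_fin, nsmul_eq_mul, hD]
        ring

theorem two_mul_exp_neg_le_div {ε δ r n c : ℝ} (hε : 0 < ε) (hδ : 0 < δ) (hr : 0 < r)
    (hn : 0 < n) (h : 3 * r / ε ^ 2 * log (2 * r * n / δ) ≤ c) :
    2 * r * exp (-(ε ^ 2 * c / (3 * r))) ≤ δ / n := by
  have hlog : log (2 * r * n / δ) ≤ ε ^ 2 * c / (3 * r) := by
    rw [le_div_iff₀ (by positivity)]
    rw [div_mul_eq_mul_div, div_le_iff₀ (by positivity)] at h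
    linarith
  calc 2 * r * exp (-(ε ^ 2 * c / (3 * r))) ≤ 2 * r * exp (-log (2 * r * n / δ)) := by
        gcongr
    _ = δ / n := by
        rw [exp_neg, exp_log (by positivity)]
        field_simp

/-- Lemma 3.2 of the paper: existence of balanced colorings. -/
theorem balanced_coloring_exists (ε δ : ℝ) (hε : ε ∈ Set.Ioc (0 : ℝ) 1)
    (hδ : δ ∈ Set.Ioc (0 : ℝ) 1) (n m k r : ℕ)
    (hk : 0 < k) (hr : 0 < r) (hkm : k ≤ m) (hmn : m ≤ n)
    (h : (3 * r / ε ^ 2) * Real.log (2 * r * n / δ) ≤ (m.choose k : ℝ)) :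
    ∃ γ : {S : Finset (Fin n) // S.card = k} → Fin r, IsBalancedColoring m ε δ γ := by
  classical
  obtain ⟨hε0, hε1⟩ := hε
  obtain ⟨hδ0, -⟩ := hδ
  have hm : 0 < m := hk.trans_le hkm
  have hn : (0 : ℝ) < n := by exact_mod_cast hm.trans_le hmn
  have : Nonempty ({S : Finset (Fin n) // S.card = k} → Fin r) := ⟨fun _ => ⟨0, hr⟩⟩
  have hbad : ∀ ℓ ∈ Icc m n, ∀ A ∈ powersetCard ℓ (univ : Finset (Fin n)),
      (#{γ : {S : Finset (Fin n) // S.card = k} → Fin r | ¬EpsBalancedOn γ ε A} : ℝ) ≤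
        δ / n * Fintype.card ({S : Finset (Fin n) // S.card = k} → Fin r) := by
    intro ℓ hℓ A hA
    have hmA : m ≤ #A := (mem_Icc.1 hℓ).1.trans (mem_powersetCard_univ.1 hA).ge
    rw [Fintype.card_fun, Fintype.card_fin, Nat.cast_pow, mul_comm]
    refine (card_not_epsBalancedOn_le hε0.le hε1 A).trans ?_
    gcongr
    refine le_trans ?_ (two_mul_exp_neg_le_div hε0 hδ0 (by exact_mod_cast hr) hn h)
    gcongr
  have hlen : (#(Icc m n) : ℝ) * (δ / n) ≤ δ := by
    rw [Nat.card_Icc, ← mul_div_assoc, div_le_iff₀ hn, mul_comm δ]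
    gcongr
    exact_mod_cast (by omega : n + 1 - m ≤ n)
  obtain ⟨γ, hγ⟩ := exists_forall_card_filter_le _ _ _ (div_nonneg hδ0.le hn.le) hbad hlen
  exact ⟨γ, isBalancedColoring_of_card_filter_not_le γ fun ℓ h1 h2 => hγ ℓ (mem_Icc.2 ⟨h1, h2⟩)⟩
end

section
/- Fix integers n ≥ t ≥ 1 and M ≥ 2, and let z_1, …, z_n be integers (a multiset Z of size n). Then for every real α ∈ [0,1], the probability over a uniformly random t-element subset S of {1,…,n} that disc_M({z_i : i ∈ S}) − disc_M(Z) ≥ α is at most 4M·exp(−tα²/8), where {z_i : i ∈ S} is the sub-multiset of size t indexed by S. -/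
/-!
Write `c_k(i) = e^{2πi k z_i / M}`. If the discrepancy of `S` exceeds that of `Z` by `α`, then for
some `k` the mean of `c_k` over `S` is `α`-far from its mean over all indices, so its real or its
imaginary part deviates by at least `α/√2` in one of the two directions: `4(M-1)` one-sided events.

Each one-sided event `mean_S x ≥ mean x + s` (with `|x_i| ≤ 1`) is a Hoeffding bound for sampling
without replacement, proved by exponential tilting. For `y_i = exp (λ (x_i - mean x))` every bad `S`
has `∏_{i∈S} y_i ≥ exp (λ t s)`, while the sum of these products over all `t`-subsets, `e_t(y)`, is
at most `C(n,t) ȳ^t` by Maclaurin's inequality, and `ȳ ≤ 1 + λ² ≤ exp λ²`. Maclaurin's inequality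
follows by induction from `(t+1) n e_{t+1} ≤ (n-t) (∑ y) e_t`, a rearrangement of
`∑_{|S|=t+1} ∏_S y · ∑_{i∈S, j∉S} (y_i - y_j) ≥ 0`; grouped by `R = S \ {i}` this sum becomes
`∑_R ∏_R y · ½ ∑_{i,j∉R} (y_i - y_j)²`.
-/

/-- The `M`-discrepancy of the multiset of integers `{z i : i ∈ s}` (with multiplicity):
the maximum over `k = 1, …, M-1` of `|(1/|s|) ∑_{i ∈ s} e^{2πi·k·z i/M}|`. -/
noncomputable def discM (M : ℕ) {ι : Type*} (s : Finset ι) (z : ι → ℤ) : ℝ :=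
  sSup {d : ℝ | ∃ k : ℕ, 1 ≤ k ∧ k ≤ M - 1 ∧
    d = ‖(∑ i ∈ s, Complex.exp (2 * Real.pi * Complex.I * k * (z i) / M)) /
          (s.card : ℂ)‖}

open Finset Real

theorem sum_sum_sub_mul_self_nonneg {ι : Type*} (A : Finset ι) (y : ι → ℝ) :
    0 ≤ ∑ i ∈ A, ∑ j ∈ A, (y i - y j) * y i := by
  have hswap : ∑ i ∈ A, ∑ j ∈ A, (y i - y j) * y i = ∑ i ∈ A, ∑ j ∈ A, (y j - y i) * y j :=
    sum_comm
  have hsq : ∑ i ∈ A, ∑ j ∈ A, (y i - y j) ^ 2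
      = ∑ i ∈ A, ∑ j ∈ A, (y i - y j) * y i + ∑ i ∈ A, ∑ j ∈ A, (y j - y i) * y j := by
    rw [← sum_add_distrib]
    refine sum_congr rfl fun i _ => ?_
    rw [← sum_add_distrib]
    exact sum_congr rfl fun j _ => by ring
  have : 0 ≤ ∑ i ∈ A, ∑ j ∈ A, (y i - y j) ^ 2 := by positivity
  linarith

theorem sum_exp_le_card_add_sum_sq {ι : Type*} (A : Finset ι) (w : ι → ℝ)
    (hw : ∀ i ∈ A, |w i| ≤ 1) (hw0 : ∑ i ∈ A, w i = 0) :
    ∑ i ∈ A, exp (w i) ≤ #A + ∑ i ∈ A, w i ^ 2 := by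
  calc ∑ i ∈ A, exp (w i) ≤ ∑ i ∈ A, (1 + w i + w i ^ 2) :=
        sum_le_sum fun i hi => by linarith [(abs_le.1 (abs_exp_sub_one_sub_id_le (hw i hi))).2]
    _ = #A + ∑ i ∈ A, w i ^ 2 := by
        rw [sum_add_distrib, sum_add_distrib, hw0, sum_const, nsmul_one, add_zero]

theorem card_filter_le_card_filter_add_card_filter {α : Type*} (s : Finset α)
    {p q r : α → Prop} [DecidablePred p] [DecidablePred q] [DecidablePred r]
    (h : ∀ a ∈ s, p a → q a ∨ r a) :
    #{a ∈ s | p a} ≤ #{a ∈ s | q a} + #{a ∈ s | r a} := by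
  classical
  refine (card_le_card fun a ha => ?_).trans (card_union_le _ _)
  rw [mem_filter] at ha
  rw [mem_union, mem_filter, mem_filter]
  rcases h a ha.1 ha.2 with hq | hr
  exacts [.inl ⟨ha.1, hq⟩, .inr ⟨ha.1, hr⟩]

section Maclaurin

variable {ι : Type*} [Fintype ι] [DecidableEq ι]

theorem sum_powersetCard_succ_sum_mem_eq_sum_sum_compl {β : Type*} [AddCommMonoid β] (t : ℕ)
    (f : Finset ι → ι → β) :
    ∑ S ∈ powersetCard (t + 1) univ, ∑ i ∈ S, f S i
      = ∑ R ∈ powersetCard t univ, ∑ i ∈ Rᶜ, f (insert i R) i := by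
  rw [sum_sigma', sum_sigma']
  refine sum_nbij' (fun p => ⟨p.1.erase p.2, p.2⟩) (fun p => ⟨insert p.2 p.1, p.2⟩)
    ?_ ?_ ?_ ?_ ?_ <;> rintro ⟨S, i⟩ hp <;>
    simp only [mem_sigma, mem_powersetCard_univ, mem_compl] at hp
  · simp [card_erase_of_mem hp.2, hp.1]
  · simp [card_insert_of_notMem hp.2, hp.1]
  · simp [insert_erase hp.2]
  · simp [erase_insert hp.2]
  · simp [insert_erase hp.2]

theorem sum_powersetCard_sum_compl_mul_prod {R : Type*} [CommSemiring R] (t : ℕ) (y : ι → R) :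
    ∑ S ∈ powersetCard t univ, (∑ i ∈ Sᶜ, y i) * ∏ j ∈ S, y j
      = (t + 1) * ∑ S ∈ powersetCard (t + 1) univ, ∏ j ∈ S, y j := by
  calc ∑ S ∈ powersetCard t univ, (∑ i ∈ Sᶜ, y i) * ∏ j ∈ S, y j
      = ∑ S ∈ powersetCard t univ, ∑ i ∈ Sᶜ, ∏ j ∈ insert i S, y j := by
        refine sum_congr rfl fun S _ => ?_
        rw [sum_mul]
        exact sum_congr rfl fun i hi => (prod_insert (mem_compl.1 hi)).symm
    _ = ∑ S ∈ powersetCard (t + 1) univ, ∑ _i ∈ S, ∏ j ∈ S, y j :=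
        (sum_powersetCard_succ_sum_mem_eq_sum_sum_compl t fun S _ => ∏ j ∈ S, y j).symm
    _ = (t + 1) * ∑ S ∈ powersetCard (t + 1) univ, ∏ j ∈ S, y j := by
        rw [mul_sum]
        refine sum_congr rfl fun S hS => ?_
        rw [sum_const, mem_powersetCard_univ.1 hS, nsmul_eq_mul]
        push_cast
        ring

theorem sum_sum_compl_sub (S : Finset ι) (y : ι → ℝ) :
    ∑ i ∈ S, ∑ j ∈ Sᶜ, (y i - y j) = Fintype.card ι * ∑ i ∈ S, y i - #S * ∑ i, y i := by
  have hcard : (#Sᶜ : ℝ) = Fintype.card ι - #S := by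
    rw [card_compl, Nat.cast_sub (card_le_univ S)]
  have hsum := sum_add_sum_compl S y
  simp only [sum_sub_distrib, sum_const, nsmul_eq_mul, ← mul_sum, hcard]
  linear_combination -(#S : ℝ) * hsum

theorem sum_powersetCard_sum_sum_compl_sub_mul_prod_nonneg (t : ℕ) (y : ι → ℝ)
    (hy : ∀ i, 0 ≤ y i) :
    0 ≤ ∑ S ∈ powersetCard t univ, (∑ i ∈ S, ∑ j ∈ Sᶜ, (y i - y j)) * ∏ j ∈ S, y j := by
  cases t with
  | zero => simp
  | succ t =>
    have hinsert : ∀ R, ∀ i ∈ Rᶜ,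
        ∑ j ∈ (insert i R)ᶜ, (y i - y j) * ∏ k ∈ insert i R, y k
          = (∑ j ∈ Rᶜ, (y i - y j) * y i) * ∏ k ∈ R, y k := by
      intro R i hi
      rw [← sum_mul, compl_insert, sum_erase _ (sub_self _), prod_insert (mem_compl.1 hi),
        sum_mul, sum_mul]
      exact sum_congr rfl fun j _ => by ring
    simp only [sum_mul]
    rw [sum_powersetCard_succ_sum_mem_eq_sum_sum_compl t
      fun S i => ∑ j ∈ Sᶜ, (y i - y j) * ∏ k ∈ S, y k]
    refine sum_nonneg fun R _ => ?_
    rw [sum_congr rfl (hinsert R), ← sum_mul]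
    exact mul_nonneg (sum_sum_sub_mul_self_nonneg _ y) (prod_nonneg fun k _ => hy k)

theorem mul_sum_mul_sum_powersetCard_prod_le (t : ℕ) (y : ι → ℝ) (hy : ∀ i, 0 ≤ y i) :
    t * (∑ i, y i) * ∑ S ∈ powersetCard t univ, ∏ j ∈ S, y j
      ≤ Fintype.card ι * ∑ S ∈ powersetCard t univ, (∑ i ∈ S, y i) * ∏ j ∈ S, y j := by
  have h := sum_powersetCard_sum_sum_compl_sub_mul_prod_nonneg t y hy
  rw [sum_congr rfl fun S hS => by rw [sum_sum_compl_sub, mem_powersetCard_univ.1 hS]] at h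
  simp only [sub_mul, sum_sub_distrib, mul_assoc, ← mul_sum] at h
  linarith

theorem succ_mul_card_mul_sum_powersetCard_succ_prod_le (t : ℕ) (y : ι → ℝ)
    (hy : ∀ i, 0 ≤ y i) :
    (t + 1) * Fintype.card ι * ∑ S ∈ powersetCard (t + 1) univ, ∏ j ∈ S, y j
      ≤ (Fintype.card ι - t) * (∑ i, y i) * ∑ S ∈ powersetCard t univ, ∏ j ∈ S, y j := by
  have hsplit : (∑ i, y i) * ∑ S ∈ powersetCard t univ, ∏ j ∈ S, y j
      = ∑ S ∈ powersetCard t univ, (∑ i ∈ S, y i) * ∏ j ∈ S, y j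
        + (t + 1) * ∑ S ∈ powersetCard (t + 1) univ, ∏ j ∈ S, y j := by
    rw [← sum_powersetCard_sum_compl_mul_prod, ← sum_add_distrib, mul_sum]
    exact sum_congr rfl fun S _ => by rw [← add_mul, sum_add_sum_compl]
  linear_combination mul_sum_mul_sum_powersetCard_prod_le t y hy - (Fintype.card ι : ℝ) * hsplit

theorem sum_powersetCard_prod_le_choose_mul_pow (y : ι → ℝ) (hy : ∀ i, 0 ≤ y i) {t : ℕ}
    (htn : t ≤ Fintype.card ι) :
    ∑ S ∈ powersetCard t univ, ∏ j ∈ S, y j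
      ≤ (Fintype.card ι).choose t * ((∑ i, y i) / Fintype.card ι) ^ t := by
  induction t with
  | zero => simp
  | succ t ih =>
    set N := Fintype.card ι
    have hN : (0 : ℝ) < N := by exact_mod_cast (Nat.succ_pos t).trans_le htn
    have hchoose : (N.choose (t + 1) : ℝ) * (t + 1) = N.choose t * (N - t) := by
      have h := congrArg (Nat.cast : ℕ → ℝ) (Nat.choose_succ_right_eq N t)
      push_cast [Nat.cast_sub (Nat.le_of_succ_le htn)] at h
      exact h
    set q := (∑ i, y i) / N
    have hsum : ∑ i, y i = N * q := (mul_div_cancel₀ _ hN.ne').symm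
    refine le_of_mul_le_mul_left ?_ (by positivity : (0 : ℝ) < (t + 1) * N)
    calc (t + 1) * N * ∑ S ∈ powersetCard (t + 1) univ, ∏ j ∈ S, y j
        ≤ (N - t) * (∑ i, y i) * ∑ S ∈ powersetCard t univ, ∏ j ∈ S, y j :=
          succ_mul_card_mul_sum_powersetCard_succ_prod_le t y hy
      _ ≤ (N - t) * (∑ i, y i) * (N.choose t * q ^ t) := by
        refine mul_le_mul_of_nonneg_left (ih (Nat.le_of_succ_le htn)) (mul_nonneg ?_ ?_)
        · exact sub_nonneg.2 (by exact_mod_cast Nat.le_of_succ_le htn)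
        · exact sum_nonneg fun i _ => hy i
      _ = (t + 1) * N * (N.choose (t + 1) * q ^ (t + 1)) := by
        rw [hsum]
        linear_combination (-(N * q ^ (t + 1))) * hchoose

end Maclaurin

section Hoeffding

variable {ι : Type*} [Fintype ι]

noncomputable def sampleMeanDeviation {K : Type*} [DivisionRing K] (x : ι → K) (S : Finset ι) :
    K :=
  (∑ i ∈ S, x i) / #S - (∑ i, x i) / Fintype.card ι

theorem sampleMeanDeviation_neg (x : ι → ℝ) (S : Finset ι) :
    sampleMeanDeviation (-x) S = -sampleMeanDeviation x S := by
  simp only [sampleMeanDeviation, Pi.neg_apply, sum_neg_distrib, neg_div, neg_sub_neg, neg_sub]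

theorem Complex.re_sampleMeanDeviation (c : ι → ℂ) (S : Finset ι) :
    (sampleMeanDeviation c S).re = sampleMeanDeviation (fun i => (c i).re) S := by
  simp [sampleMeanDeviation, Complex.re_sum]

theorem Complex.im_sampleMeanDeviation (c : ι → ℂ) (S : Finset ι) :
    (sampleMeanDeviation c S).im = sampleMeanDeviation (fun i => (c i).im) S := by
  simp [sampleMeanDeviation, Complex.im_sum]

theorem sum_sub_mean_sq_le_card [Nonempty ι] (x : ι → ℝ) (hx : ∀ i, |x i| ≤ 1) :
    ∑ i, (x i - (∑ j, x j) / Fintype.card ι) ^ 2 ≤ Fintype.card ι := by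
  set N := Fintype.card ι
  set μ := (∑ j, x j) / N
  have hsum : ∑ i, x i = N * μ := (mul_div_cancel₀ _ (by positivity)).symm
  have hexpand : ∑ i, (x i - μ) ^ 2 = ∑ i, x i ^ 2 - N * μ ^ 2 := by
    simp only [sub_sq, sum_add_distrib, sum_sub_distrib, ← sum_mul, ← mul_sum, hsum,
      sum_const, card_univ, nsmul_eq_mul]
    ring
  have hsq : ∑ i, x i ^ 2 ≤ ∑ _i : ι, (1 : ℝ) :=
    sum_le_sum fun i _ => (sq_le_one_iff_abs_le_one _).2 (hx i)
  simp only [sum_const, card_univ, nsmul_one] at hsq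
  nlinarith [sq_nonneg μ]

theorem sum_exp_mul_sub_mean_le [Nonempty ι] (x : ι → ℝ) (hx : ∀ i, |x i| ≤ 1) {l : ℝ}
    (hl0 : 0 ≤ l) (hl : l ≤ 1 / 2) :
    ∑ i, exp (l * (x i - (∑ j, x j) / Fintype.card ι)) ≤ Fintype.card ι * exp (l ^ 2) := by
  set N := Fintype.card ι
  set μ := (∑ j, x j) / N
  have hN : (0 : ℝ) < N := by exact_mod_cast Fintype.card_pos
  have hsum : ∑ i, x i = N * μ := (mul_div_cancel₀ _ hN.ne').symm
  have hμ : |μ| ≤ 1 := by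
    rw [abs_div, Nat.abs_cast, div_le_one hN]
    calc |∑ i, x i| ≤ ∑ i, |x i| := abs_sum_le_sum_abs _ _
      _ ≤ ∑ _i : ι, (1 : ℝ) := sum_le_sum fun i _ => hx i
      _ = N := by simp [N]
  have hcentered : ∑ i, (x i - μ) = 0 := by
    rw [sum_sub_distrib, hsum, sum_const, card_univ, nsmul_eq_mul, sub_self]
  have hvar : ∑ i, (x i - μ) ^ 2 ≤ N := sum_sub_mean_sq_le_card x hx
  have hbound : ∀ i ∈ univ, |l * (x i - μ)| ≤ 1 := fun i _ => by
    rw [abs_mul, abs_of_nonneg hl0]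
    have : |x i - μ| ≤ 2 := (abs_sub _ _).trans (by linarith [hx i])
    nlinarith [abs_nonneg (x i - μ)]
  calc ∑ i, exp (l * (x i - μ)) ≤ N + ∑ i, (l * (x i - μ)) ^ 2 := by
        refine sum_exp_le_card_add_sum_sq univ _ hbound ?_
        rw [← mul_sum, hcentered, mul_zero]
    _ ≤ N * (1 + l ^ 2) := by
        simp only [mul_pow, ← mul_sum]
        nlinarith [sq_nonneg l]
    _ ≤ N * exp (l ^ 2) := by
        gcongr
        linarith [add_one_le_exp (l ^ 2)]

theorem card_filter_le_sampleMeanDeviation (x : ι → ℝ) (hx : ∀ i, |x i| ≤ 1) {t : ℕ}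
    (ht : 1 ≤ t) (htn : t ≤ Fintype.card ι) {s : ℝ} (hs0 : 0 ≤ s) (hs1 : s ≤ 1) :
    (#{S ∈ powersetCard t univ | s ≤ sampleMeanDeviation x S} : ℝ)
      ≤ exp (-(t * s ^ 2) / 4) * (Fintype.card ι).choose t := by
  classical
  have : Nonempty ι := Fintype.card_pos_iff.1 (by omega : 0 < Fintype.card ι)
  set N := Fintype.card ι
  set μ := (∑ j, x j) / N
  set F := {S ∈ powersetCard t (univ : Finset ι) | s ≤ sampleMeanDeviation x S}
  -- tilting by `s / 2` optimizes `exp (t λ² - λ t s)`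
  set y := fun i => exp (s / 2 * (x i - μ))
  have hy : ∀ i, 0 ≤ y i := fun i => (exp_pos _).le
  have hmean : (∑ i, y i) / N ≤ exp ((s / 2) ^ 2) := by
    have hN : (0 : ℝ) < N := by exact_mod_cast Fintype.card_pos
    rw [div_le_iff₀ hN, mul_comm]
    exact sum_exp_mul_sub_mean_le x hx (by linarith) (by linarith)
  have htilt : ∀ S ∈ F, exp (s / 2 * (t * s)) ≤ ∏ i ∈ S, y i := by
    intro S hS
    obtain ⟨hSt, hSs⟩ := mem_filter.1 hS
    rw [sampleMeanDeviation, mem_powersetCard_univ.1 hSt, le_sub_iff_add_le,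
      le_div_iff₀ (by exact_mod_cast ht : (0 : ℝ) < t)] at hSs
    rw [← exp_sum, ← mul_sum, sum_sub_distrib, sum_const, mem_powersetCard_univ.1 hSt,
      nsmul_eq_mul]
    gcongr
    linarith
  have hcount : #F * exp (s / 2 * (t * s)) ≤ N.choose t * exp ((s / 2) ^ 2) ^ t :=
    calc #F * exp (s / 2 * (t * s)) ≤ ∑ S ∈ F, ∏ i ∈ S, y i := by
          rw [← nsmul_eq_mul, ← sum_const]
          exact sum_le_sum htilt
      _ ≤ ∑ S ∈ powersetCard t univ, ∏ i ∈ S, y i :=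
          sum_le_sum_of_subset_of_nonneg (filter_subset _ _)
            fun S _ _ => prod_nonneg fun i _ => hy i
      _ ≤ N.choose t * ((∑ i, y i) / N) ^ t := sum_powersetCard_prod_le_choose_mul_pow y hy htn
      _ ≤ N.choose t * exp ((s / 2) ^ 2) ^ t := by gcongr
  rw [← exp_nat_mul, ← le_div_iff₀ (exp_pos _), mul_div_assoc, ← exp_sub] at hcount
  refine hcount.trans_eq ?_
  rw [mul_comm]
  congr 2
  ring

theorem card_filter_le_abs_sampleMeanDeviation (x : ι → ℝ) (hx : ∀ i, |x i| ≤ 1) {t : ℕ}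
    (ht : 1 ≤ t) (htn : t ≤ Fintype.card ι) {s : ℝ} (hs0 : 0 ≤ s) (hs1 : s ≤ 1) :
    (#{S ∈ powersetCard t univ | s ≤ |sampleMeanDeviation x S|} : ℝ)
      ≤ 2 * exp (-(t * s ^ 2) / 4) * (Fintype.card ι).choose t := by
  have hsplit := card_filter_le_card_filter_add_card_filter (powersetCard t univ)
    (p := fun S => s ≤ |sampleMeanDeviation x S|) (q := fun S => s ≤ sampleMeanDeviation x S)
    (r := fun S => s ≤ sampleMeanDeviation (-x) S)
    fun S _ hS => by rwa [sampleMeanDeviation_neg, ← le_abs]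
  have hnegx : ∀ i, |(-x) i| ≤ 1 := fun i => (abs_neg (x i)).trans_le (hx i)
  refine (Nat.cast_le.2 hsplit).trans ?_
  rw [Nat.cast_add]
  refine (add_le_add (card_filter_le_sampleMeanDeviation x hx ht htn hs0 hs1)
    (card_filter_le_sampleMeanDeviation (-x) hnegx ht htn hs0 hs1)).trans_eq ?_
  ring

theorem card_filter_le_norm_sampleMeanDeviation (c : ι → ℂ) (hc : ∀ i, ‖c i‖ ≤ 1) {t : ℕ}
    (ht : 1 ≤ t) (htn : t ≤ Fintype.card ι) {α : ℝ} (hα0 : 0 ≤ α) (hα1 : α ≤ 1) :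
    (#{S ∈ powersetCard t univ | α ≤ ‖sampleMeanDeviation c S‖} : ℝ)
      ≤ 4 * exp (-(t * α ^ 2) / 8) * (Fintype.card ι).choose t := by
  have hsqrt2 : 1 ≤ √2 := one_le_sqrt.2 one_le_two
  set s := α / √2
  have hs0 : 0 ≤ s := div_nonneg hα0 (by positivity)
  have hs1 : s ≤ 1 := (div_le_self hα0 hsqrt2).trans hα1
  have hexp : exp (-(t * s ^ 2) / 4) = exp (-(t * α ^ 2) / 8) := by
    rw [div_pow, sq_sqrt zero_le_two]
    ring_nf
  have hsplit := card_filter_le_card_filter_add_card_filter (powersetCard t univ)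
    (p := fun S => α ≤ ‖sampleMeanDeviation c S‖)
    (q := fun S => s ≤ |sampleMeanDeviation (fun i => (c i).re) S|)
    (r := fun S => s ≤ |sampleMeanDeviation (fun i => (c i).im) S|)
    fun S _ hS => by
      have hmax := hS.trans (Complex.norm_le_sqrt_two_mul_max _)
      rwa [← div_le_iff₀' (by positivity), le_max_iff, Complex.re_sampleMeanDeviation,
        Complex.im_sampleMeanDeviation] at hmax
  have hre : ∀ i, |(c i).re| ≤ 1 := fun i => (Complex.abs_re_le_norm _).trans (hc i)
  have him : ∀ i, |(c i).im| ≤ 1 := fun i => (Complex.abs_im_le_norm _).trans (hc i)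
  refine (Nat.cast_le.2 hsplit).trans ?_
  rw [Nat.cast_add]
  refine (add_le_add (card_filter_le_abs_sampleMeanDeviation _ hre ht htn hs0 hs1)
    (card_filter_le_abs_sampleMeanDeviation _ him ht htn hs0 hs1)).trans_eq ?_
  rw [hexp]
  ring

end Hoeffding

theorem exists_le_norm_sub_of_le_discM_sub {ι : Type*} {M : ℕ} (hM : 2 ≤ M) (s s' : Finset ι)
    (z : ι → ℤ) {α : ℝ} (h : α ≤ discM M s z - discM M s' z) :
    ∃ k ∈ Set.Icc 1 (M - 1),
      α ≤ ‖(∑ i ∈ s, Complex.exp (2 * π * Complex.I * k * z i / M)) / #s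
        - (∑ i ∈ s', Complex.exp (2 * π * Complex.I * k * z i / M)) / #s'‖ := by
  set g : ℕ → Finset ι → ℝ := fun k S =>
    ‖(∑ i ∈ S, Complex.exp (2 * π * Complex.I * k * z i / M)) / #S‖
  have hdisc : ∀ S, discM M S z = sSup ((fun k => g k S) '' Set.Icc 1 (M - 1)) := fun S =>
    congrArg sSup <| Set.ext fun _ =>
      ⟨fun ⟨k, h1, h2, hd⟩ => ⟨k, ⟨h1, h2⟩, hd.symm⟩, fun ⟨k, ⟨h1, h2⟩, hd⟩ => ⟨k, h1, h2, hd.symm⟩⟩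
  have hfin : ∀ S, ((fun k => g k S) '' Set.Icc 1 (M - 1)).Finite := fun S =>
    (Set.finite_Icc _ _).image _
  obtain ⟨k, hk, hks⟩ : discM M s z ∈ (fun k => g k s) '' Set.Icc 1 (M - 1) := by
    rw [hdisc]
    exact Set.Nonempty.csSup_mem ((Set.nonempty_Icc.2 (by omega)).image _) (hfin s)
  have hks' : g k s' ≤ discM M s' z := by
    rw [hdisc]
    exact le_csSup (hfin s').bddAbove (Set.mem_image_of_mem _ hk)
  exact ⟨k, hk, le_trans (show α ≤ g k s - g k s' by linarith) (norm_sub_norm_le _ _)⟩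

/-- Lemma 3.5 of the paper: discrepancy under sampling without replacement.  The number of
`t`-element subsets `S` on which the discrepancy of the sub-multiset exceeds that of the
whole multiset by at least `α` is at most a `4M·exp(-tα²/8)` fraction of all `t`-subsets. -/
theorem discrepancy_sampling_without_replacement (n t M : ℕ)
    (ht : 1 ≤ t) (htn : t ≤ n) (hM : 2 ≤ M)
    (z : Fin n → ℤ) (α : ℝ) (hα : α ∈ Set.Icc (0 : ℝ) 1) :
    (Nat.card {S : Finset (Fin n) // S.card = t ∧
        α ≤ discM M S z - discM M Finset.univ z} : ℝ) ≤
      4 * M * Real.exp (-(t * α ^ 2) / 8) * (n.choose t : ℝ) := by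
  set c : ℕ → Fin n → ℂ := fun k i => Complex.exp (2 * π * Complex.I * k * z i / M)
  have hc : ∀ k i, ‖c k i‖ ≤ 1 := fun k i => by simp [c, Complex.norm_exp]
  have hcover : ({S | S.card = t ∧ α ≤ discM M S z - discM M univ z} : Finset (Finset (Fin n)))
      ⊆ (Icc 1 (M - 1)).biUnion
          fun k => {S ∈ powersetCard t univ | α ≤ ‖sampleMeanDeviation (c k) S‖} := by
    intro S hS
    obtain ⟨hSt, hSα⟩ := (mem_filter.1 hS).2
    obtain ⟨k, hk, hαk⟩ := exists_le_norm_sub_of_le_discM_sub hM S univ z hSα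
    refine mem_biUnion.2 ⟨k, mem_Icc.2 hk, mem_filter.2 ⟨mem_powersetCard_univ.2 hSt, ?_⟩⟩
    simpa [sampleMeanDeviation] using hαk
  rw [Nat.card_eq_fintype_card, Fintype.card_subtype]
  calc (#{S | S.card = t ∧ α ≤ discM M S z - discM M univ z} : ℝ)
      ≤ ∑ k ∈ Icc 1 (M - 1), (#{S ∈ powersetCard t univ | α ≤ ‖sampleMeanDeviation (c k) S‖} : ℝ) :=
        by exact_mod_cast (card_le_card hcover).trans card_biUnion_le
    _ ≤ ∑ k ∈ Icc 1 (M - 1), 4 * exp (-(t * α ^ 2) / 8) * n.choose t := sum_le_sum fun k _ => by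
        simpa using card_filter_le_norm_sampleMeanDeviation (c k) (hc k) ht (by simpa using htn)
          hα.1 hα.2
    _ = (M - 1 : ℕ) * (4 * exp (-(t * α ^ 2) / 8) * n.choose t) := by
        rw [sum_const, Nat.card_Icc, Nat.add_sub_cancel, nsmul_eq_mul]
    _ ≤ M * (4 * exp (-(t * α ^ 2) / 8) * n.choose t) := by
        gcongr
        omega
    _ = 4 * M * exp (-(t * α ^ 2) / 8) * n.choose t := by ring
end

section
/- There is a constant C* ≥ 1 such that for all integers M ≥ 2 and t ≥ 2 there is a nonempty set S ⊆ {1, 2, …, M} with |S| ≤ t and disc_M(S) ≤ C*·(log t / t^{1/4}) · (log M / (1 + log log M)). -/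
/-!
For `t ≤ M` choose `m ≈ M/t` and `n ≤ t ≤ 4n` with `n·m ≤ M ≤ n·m + m`, cut `{0, …, n·m - 1}`
into `n` blocks of `m` consecutive integers and pick one element `σ i` from each block. For each frequency `k`, with
`ζ = e^{2πik/M}`, the sum `∑_{s ∈ S} ζ^s` is a sum `∑_i (ζ^{σ i} - 𝔼_{c ∈ block i} ζ^c)` of
centred terms plus the sum of the block averages; the latter is `1/m` times the complete
geometric sum `∑_{s < M} ζ^s = 0` minus at most `m` of its terms, so it has norm at most `1`.

Averaging the `2q`-th power of the centred sum over all choices of `σ` and expanding, every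
pair of words in which some block occurs exactly once contributes zero, and the other pairs are
few: at most `(q + 1)·n^q·q^{2q}`. With `q ≈ log M` this survives the union bound over the
`M - 1` frequencies, so some `σ` has discrepancy `O(log M / √t)`. That is the claimed bound
when `√(log M) ≲ t^{1/4}`; otherwise the claimed bound exceeds `1` and one point suffices, and
for `M ≤ t` all of `{1, …, M}` has discrepancy `0`.
-/

open Finset Complex Real
open scoped BigOperators ComplexConjugate

section Moments

variable {ι κ : Type*} [Fintype ι] [DecidableEq ι] [Fintype κ]

lemma prod_comp_eq_prod_pow_card_fiber {α : Type*} [CommMonoid α] {q : ℕ}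
    (f : Fin q → ι) (v : ι → α) : ∏ j, v (f j) = ∏ i, v i ^ #{j | f j = i} := by
  simp_rw [← Finset.prod_fiberwise' univ f v, prod_const]

lemma sum_card_fiber {q : ℕ} (f : Fin q → ι) : ∑ i, #{j | f j = i} = q := by
  simpa using (card_eq_sum_card_fiberwise (f := f) (s := univ) (t := univ)
    fun _ _ ↦ mem_univ _).symm

lemma ofReal_norm_sum_pow_eq (w : ι → ℂ) (q : ℕ) :
    ((‖∑ i, w i‖ ^ (2 * q) : ℝ) : ℂ) =
      ∑ fg : (Fin q → ι) × (Fin q → ι),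
        ∏ i, w i ^ #{j | fg.1 j = i} * conj (w i) ^ #{j | fg.2 j = i} := by
  calc ((‖∑ i, w i‖ ^ (2 * q) : ℝ) : ℂ)
      = (∑ i, w i) ^ q * (∑ i, conj (w i)) ^ q := by
        rw [pow_mul, Complex.sq_norm, ← map_sum, ← mul_pow, mul_conj, ofReal_pow]
    _ = ∑ fg : (Fin q → ι) × (Fin q → ι),
          (∏ j, w (fg.1 j)) * ∏ j, conj (w (fg.2 j)) := by
        rw [Fintype.sum_pow, Fintype.sum_pow, sum_mul_sum, ← Fintype.sum_prod_type']
    _ = _ := by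
        refine sum_congr rfl fun fg _ ↦ ?_
        rw [prod_comp_eq_prod_pow_card_fiber fg.1 w,
          prod_comp_eq_prod_pow_card_fiber fg.2 (fun i ↦ conj (w i)), ← prod_mul_distrib]

lemma sum_ofReal_norm_sum_pow_eq (Y : ι → κ → ℂ) (q : ℕ) :
    ∑ σ : ι → κ, ((‖∑ i, Y i (σ i)‖ ^ (2 * q) : ℝ) : ℂ) =
      ∑ fg : (Fin q → ι) × (Fin q → ι),
        ∏ i, ∑ c, Y i c ^ #{j | fg.1 j = i} * conj (Y i c) ^ #{j | fg.2 j = i} := by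
  simp_rw [ofReal_norm_sum_pow_eq]
  rw [sum_comm]
  exact sum_congr rfl fun fg _ ↦ (Fintype.prod_sum fun i c ↦
    Y i c ^ #{j | fg.1 j = i} * conj (Y i c) ^ #{j | fg.2 j = i}).symm

variable (ι) in
def pairedWords (q : ℕ) : Finset ((Fin q → ι) × (Fin q → ι)) :=
  {fg | ∀ i, #{j | fg.1 j = i} + #{j | fg.2 j = i} ≠ 1}

lemma prod_sum_pow_mul_conj_pow_eq_zero {Y : ι → κ → ℂ} (hY : ∀ i, ∑ c, Y i c = 0) {q : ℕ}
    {fg : (Fin q → ι) × (Fin q → ι)} (hfg : fg ∉ pairedWords ι q) :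
    ∏ i, ∑ c, Y i c ^ #{j | fg.1 j = i} * conj (Y i c) ^ #{j | fg.2 j = i} = 0 := by
  simp only [pairedWords, mem_filter, mem_univ, true_and, not_forall, not_not] at hfg
  obtain ⟨i, hi⟩ := hfg
  refine prod_eq_zero (mem_univ i) ?_
  obtain ⟨h1, h2⟩ | ⟨h1, h2⟩ : (#{j | fg.1 j = i} = 1 ∧ #{j | fg.2 j = i} = 0) ∨
      (#{j | fg.1 j = i} = 0 ∧ #{j | fg.2 j = i} = 1) := by omega
  · simp [h1, h2, hY]
  · simp [h1, h2, ← map_sum, hY]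

lemma norm_prod_sum_pow_mul_conj_pow_le {Y : ι → κ → ℂ} {B : ℝ} (hB : ∀ i c, ‖Y i c‖ ≤ B)
    {q : ℕ} (fg : (Fin q → ι) × (Fin q → ι)) :
    ‖∏ i, ∑ c, Y i c ^ #{j | fg.1 j = i} * conj (Y i c) ^ #{j | fg.2 j = i}‖ ≤
      Fintype.card κ ^ Fintype.card ι * B ^ (2 * q) := by
  calc _ ≤ ∏ i, (Fintype.card κ * B ^ (#{j | fg.1 j = i} + #{j | fg.2 j = i}) : ℝ) := by
        rw [norm_prod]
        gcongr with i
        refine (norm_sum_le _ _).trans ?_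
        rw [← nsmul_eq_mul, ← card_univ, ← sum_const]
        gcongr with c
        rw [norm_mul, norm_pow, norm_pow, norm_conj, pow_add]
        have hpow (n : ℕ) : ‖Y i c‖ ^ n ≤ B ^ n := pow_le_pow_left₀ (norm_nonneg _) (hB i c) n
        exact mul_le_mul (hpow _) (hpow _) (by positivity)
          ((pow_nonneg (norm_nonneg _) _).trans (hpow _))
    _ = _ := by
        rw [prod_mul_distrib, prod_const, prod_pow_eq_pow_sum, sum_add_distrib, sum_card_fiber,
          sum_card_fiber, two_mul, card_univ]

theorem sum_norm_sum_pow_le {Y : ι → κ → ℂ} {B : ℝ} (hY : ∀ i, ∑ c, Y i c = 0)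
    (hB : ∀ i c, ‖Y i c‖ ≤ B) (q : ℕ) :
    ∑ σ : ι → κ, ‖∑ i, Y i (σ i)‖ ^ (2 * q) ≤
      #(pairedWords ι q) * (Fintype.card κ ^ Fintype.card ι * B ^ (2 * q)) := by
  calc ∑ σ : ι → κ, ‖∑ i, Y i (σ i)‖ ^ (2 * q)
      = (∑ σ : ι → κ, ((‖∑ i, Y i (σ i)‖ ^ (2 * q) : ℝ) : ℂ)).re := by
        rw [← ofReal_sum, ofReal_re]
    _ ≤ ∑ fg ∈ pairedWords ι q,
          ‖∏ i, ∑ c, Y i c ^ #{j | fg.1 j = i} * conj (Y i c) ^ #{j | fg.2 j = i}‖ := by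
        rw [sum_ofReal_norm_sum_pow_eq, ← sum_subset (subset_univ _)
          fun fg _ hfg ↦ prod_sum_pow_mul_conj_pow_eq_zero hY hfg]
        exact (re_le_norm _).trans (norm_sum_le _ _)
    _ ≤ _ := by
        rw [← nsmul_eq_mul, ← sum_const]
        exact sum_le_sum fun fg _ ↦ norm_prod_sum_pow_mul_conj_pow_le hB fg

theorem exists_forall_norm_sum_pow_le [Nonempty κ] {K : Type*} (s : Finset K)
    {Y : K → ι → κ → ℂ} {B : ℝ}
    (hY : ∀ k ∈ s, ∀ i, ∑ c, Y k i c = 0) (hB : ∀ k ∈ s, ∀ i c, ‖Y k i c‖ ≤ B) (q : ℕ) :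
    ∃ σ : ι → κ, ∀ k ∈ s,
      ‖∑ i, Y k i (σ i)‖ ^ (2 * q) ≤ #s * #(pairedWords ι q) * B ^ (2 * q) := by
  have hsum : ∑ σ : ι → κ, ∑ k ∈ s, ‖∑ i, Y k i (σ i)‖ ^ (2 * q) ≤
      ∑ _σ : ι → κ, (#s * #(pairedWords ι q) * B ^ (2 * q) : ℝ) := by
    rw [sum_comm, sum_const, card_univ, Fintype.card_fun, nsmul_eq_mul]
    calc _ ≤ ∑ _k ∈ s, #(pairedWords ι q) * (Fintype.card κ ^ Fintype.card ι * B ^ (2 * q) : ℝ) :=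
          sum_le_sum fun k hk ↦ sum_norm_sum_pow_le (hY k hk) (hB k hk) q
      _ = _ := by rw [sum_const, nsmul_eq_mul]; push_cast; ring
  obtain ⟨σ, -, hσ⟩ := exists_le_of_sum_le univ_nonempty hsum
  exact ⟨σ, fun k hk ↦ (single_le_sum (fun _ _ ↦ by positivity) hk).trans hσ⟩

end Moments

section Counting

variable {ι : Type*} [Fintype ι] [DecidableEq ι]

lemma card_finsets_card_le [Nonempty ι] (q : ℕ) :
    #{s : Finset ι | #s ≤ q} ≤ (q + 1) * Fintype.card ι ^ q := by
  calc #{s : Finset ι | #s ≤ q}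
      ≤ #((range (q + 1)).biUnion fun j ↦ powersetCard j (univ : Finset ι)) := by
        refine card_le_card fun s hs ↦ ?_
        simp only [mem_filter, mem_univ, true_and] at hs
        simp only [mem_biUnion, mem_range, mem_powersetCard, subset_univ, true_and]
        exact ⟨#s, by omega, rfl⟩
    _ ≤ ∑ j ∈ range (q + 1), #(powersetCard j (univ : Finset ι)) := card_biUnion_le
    _ ≤ ∑ j ∈ range (q + 1), Fintype.card ι ^ q := by
        gcongr with j hj
        rw [card_powersetCard, card_univ]
        exact (Nat.choose_le_pow _ _).trans
          (Nat.pow_le_pow_right Fintype.card_pos (by rw [mem_range] at hj; omega))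
    _ = _ := by rw [sum_const, card_range, smul_eq_mul]

lemma card_image_union_image_le_of_mem_pairedWords {q : ℕ} {fg : (Fin q → ι) × (Fin q → ι)}
    (h : fg ∈ pairedWords ι q) : #(image fg.1 univ ∪ image fg.2 univ) ≤ q := by
  simp only [pairedWords, mem_filter, mem_univ, true_and] at h
  set s := image fg.1 univ ∪ image fg.2 univ
  have htwo : ∀ i ∈ s, 2 ≤ #{j | fg.1 j = i} + #{j | fg.2 j = i} := by
    intro i hi
    have hpos : 0 < #{j | fg.1 j = i} + #{j | fg.2 j = i} := by
      rcases mem_union.mp hi with hi | hi <;> obtain ⟨j, -, rfl⟩ := mem_image.mp hi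
      · exact Nat.add_pos_left (card_pos.mpr ⟨j, by simp⟩) _
      · exact Nat.add_pos_right _ (card_pos.mpr ⟨j, by simp⟩)
    have := h i
    omega
  have : 2 * #s ≤ 2 * q := calc
    2 * #s = ∑ _i ∈ s, 2 := by rw [sum_const, smul_eq_mul, mul_comm]
    _ ≤ ∑ i ∈ s, (#{j | fg.1 j = i} + #{j | fg.2 j = i}) := sum_le_sum htwo
    _ ≤ ∑ i, (#{j | fg.1 j = i} + #{j | fg.2 j = i}) := sum_le_sum_of_subset (subset_univ s)
    _ = 2 * q := by rw [sum_add_distrib, sum_card_fiber, sum_card_fiber, two_mul]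
  omega

lemma card_pairedWords_le [Nonempty ι] (q : ℕ) :
    #(pairedWords ι q) ≤ (q + 1) * Fintype.card ι ^ q * q ^ (2 * q) := by
  have hsub : pairedWords ι q ⊆ ({s : Finset ι | #s ≤ q} : Finset _).biUnion fun s ↦
      Fintype.piFinset (fun _ ↦ s) ×ˢ Fintype.piFinset (fun _ ↦ s) := by
    intro fg hfg
    simp only [mem_biUnion, mem_filter, mem_univ, true_and, mem_product, Fintype.mem_piFinset]
    exact ⟨_, card_image_union_image_le_of_mem_pairedWords hfg,
      fun j ↦ mem_union_left _ (mem_image_of_mem _ (mem_univ j)),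
      fun j ↦ mem_union_right _ (mem_image_of_mem _ (mem_univ j))⟩
  calc #(pairedWords ι q)
      ≤ ∑ s ∈ {s : Finset ι | #s ≤ q}, #s ^ q * #s ^ q := by
        refine (card_le_card hsub).trans (card_biUnion_le.trans_eq ?_)
        simp only [card_product, Fintype.card_piFinset_const]
    _ ≤ ∑ _s ∈ {s : Finset ι | #s ≤ q}, q ^ (2 * q) := by
        gcongr with s hs
        rw [← pow_add, ← two_mul]
        exact Nat.pow_le_pow_left (mem_filter.mp hs).2 _
    _ ≤ _ := by
        rw [sum_const, smul_eq_mul]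
        gcongr
        exact card_finsets_card_le q

end Counting

theorem exists_forall_norm_sum_sub_expect_le {ι κ K : Type*} [Fintype ι] [DecidableEq ι]
    [Nonempty ι] [Fintype κ] [Nonempty κ] (s : Finset K) {z : K → ι → κ → ℂ}
    (hz : ∀ k ∈ s, ∀ i c, ‖z k i c‖ ≤ 1) {q : ℕ} (hq : 0 < q) (hs : #s ≤ 4 ^ q) :
    ∃ σ : ι → κ, ∀ k ∈ s,
      ‖∑ i, (z k i (σ i) - 𝔼 c, z k i c)‖ ≤ 6 * q * √(Fintype.card ι) := by
  set n := Fintype.card ι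
  have hexpect : ∀ k ∈ s, ∀ i, ‖𝔼 c, z k i c‖ ≤ 1 := fun k hk i ↦
    (RCLike.norm_expect_le (K := ℂ)).trans (expect_le univ_nonempty fun c _ ↦ hz k hk i c)
  obtain ⟨σ, hσ⟩ := exists_forall_norm_sum_pow_le s (Y := fun k i c ↦ z k i c - 𝔼 c, z k i c)
    (B := 2) (fun k _ i ↦ by rw [sum_sub_distrib, sum_const, card_smul_expect, sub_self])
    (fun k hk i c ↦ (norm_sub_le _ _).trans (by linarith [hz k hk i c, hexpect k hk i])) q
  refine ⟨σ, fun k hk ↦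
    (pow_le_pow_iff_left₀ (norm_nonneg _) (by positivity) (by omega : 2 * q ≠ 0)).mp
      ((hσ k hk).trans ?_)⟩
  have hq2 : q + 1 ≤ 2 ^ q := Nat.lt_two_pow_self
  have hcount := card_pairedWords_le (ι := ι) q
  calc (#s * #(pairedWords ι q) * 2 ^ (2 * q) : ℝ)
      ≤ ((4 ^ q * (2 ^ q * n ^ q * q ^ (2 * q)) * 2 ^ (2 * q) : ℕ) : ℝ) := by
        push_cast
        gcongr
        · exact_mod_cast hs
        · exact_mod_cast hcount.trans (by gcongr)
    _ = ((4 * 2 * 4) ^ q : ℝ) * ((q : ℝ) ^ 2) ^ q * (n : ℝ) ^ q := by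
        push_cast; simp only [mul_pow, pow_mul]; ring
    _ ≤ (36 : ℝ) ^ q * ((q : ℝ) ^ 2) ^ q * (n : ℝ) ^ q := by gcongr; norm_num
    _ = (6 * q * √n) ^ (2 * q) := by
        rw [pow_mul, mul_pow (6 * (q : ℝ)), Real.sq_sqrt (by positivity)]
        ring

section Blocks

variable {M : ℕ} {ζ : ℂ}

lemma norm_geom_sum_le_of_geom_sum_eq_zero (hζ : ‖ζ‖ ≤ 1) (h0 : ∑ j ∈ range M, ζ ^ j = 0)
    {N : ℕ} (hN : N ≤ M) : ‖∑ j ∈ range N, ζ ^ j‖ ≤ M - N := by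
  rw [← sum_range_add_sum_Ico _ hN, add_eq_zero_iff_eq_neg] at h0
  rw [h0, norm_neg]
  calc _ ≤ ∑ j ∈ Ico N M, ‖ζ ^ j‖ := norm_sum_le _ _
    _ ≤ ∑ _j ∈ Ico N M, (1 : ℝ) := sum_le_sum fun j _ ↦ by
        rw [norm_pow]; exact pow_le_one₀ (norm_nonneg _) hζ
    _ = M - N := by rw [sum_const, Nat.card_Ico, nsmul_one, Nat.cast_sub hN]

lemma norm_sum_expect_blocks_le (hζ : ‖ζ‖ ≤ 1) (h0 : ∑ j ∈ range M, ζ ^ j = 0) {n m : ℕ}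
    (hm : 0 < m) (hnm : n * m ≤ M) (hM : M ≤ n * m + m) :
    ‖∑ i : Fin n, 𝔼 c : Fin m, ζ ^ (finProdFinEquiv (i, c) : ℕ)‖ ≤ 1 := by
  have hsum : ∑ i : Fin n, ∑ c : Fin m, ζ ^ (finProdFinEquiv (i, c) : ℕ) =
      ∑ j ∈ range (n * m), ζ ^ j := by
    rw [← Fintype.sum_prod_type', finProdFinEquiv.sum_comp (fun j ↦ ζ ^ (j : ℕ)),
      Fin.sum_univ_eq_sum_range]
  have hM' : (M : ℝ) ≤ (n * m : ℕ) + m := by exact_mod_cast hM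
  simp_rw [Fintype.expect_eq_sum_div_card, Fintype.card_fin]
  rw [← sum_div, hsum, norm_div, Complex.norm_natCast,
    div_le_one (by exact_mod_cast hm)]
  linarith [norm_geom_sum_le_of_geom_sum_eq_zero hζ h0 hnm]

theorem exists_subset_range_forall_norm_sum_pow_le {K : Type*} (s : Finset K) {ζ : K → ℂ}
    (hζ : ∀ k ∈ s, ‖ζ k‖ ≤ 1) (h0 : ∀ k ∈ s, ∑ j ∈ range M, ζ k ^ j = 0)
    {n m q : ℕ} (hn : 0 < n) (hm : 0 < m) (hnm : n * m ≤ M) (hM : M ≤ n * m + m)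
    (hq : 0 < q) (hs : #s ≤ 4 ^ q) :
    ∃ S ⊆ range M, #S = n ∧ ∀ k ∈ s, ‖∑ j ∈ S, ζ k ^ j‖ ≤ 7 * q * √n := by
  have : Nonempty (Fin n) := ⟨⟨0, hn⟩⟩
  have : Nonempty (Fin m) := ⟨⟨0, hm⟩⟩
  set e : Fin n → Fin m → ℕ := fun i c ↦ finProdFinEquiv (i, c)
  obtain ⟨σ, hσ⟩ := exists_forall_norm_sum_sub_expect_le s (z := fun k i c ↦ ζ k ^ e i c)
    (fun k hk i c ↦ by rw [norm_pow]; exact pow_le_one₀ (norm_nonneg _) (hζ k hk)) hq hs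
  have he : Function.Injective fun i ↦ e i (σ i) := fun i i' h ↦
    congrArg Prod.fst (finProdFinEquiv.injective (Fin.ext h))
  refine ⟨univ.image fun i ↦ e i (σ i), fun j hj ↦ ?_, by simp [card_image_of_injective _ he],
    fun k hk ↦ ?_⟩
  · obtain ⟨i, -, rfl⟩ := mem_image.mp hj
    exact mem_range.mpr ((finProdFinEquiv (i, σ i)).isLt.trans_le hnm)
  have hqn : (1 : ℝ) ≤ q * √n := one_le_mul_of_one_le_of_one_le (by exact_mod_cast hq)
    (Real.one_le_sqrt.mpr (by exact_mod_cast hn))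
  rw [sum_image fun i _ i' _ h ↦ he h]
  calc ‖∑ i, ζ k ^ e i (σ i)‖
      = ‖∑ i, (ζ k ^ e i (σ i) - 𝔼 c, ζ k ^ e i c) + ∑ i, 𝔼 c, ζ k ^ e i c‖ := by
        rw [← sum_add_distrib]; simp
    _ ≤ 6 * q * √n + 1 := norm_add_le_of_le (by simpa using hσ k hk)
        (norm_sum_expect_blocks_le (hζ k hk) (h0 k hk) hm hnm hM)
    _ ≤ 7 * q * √n := by linarith

end Blocks

section Estimates

lemma one_add_logb_le_three_mul_sqrt {x : ℝ} (hx : 1 ≤ x) : 1 + logb 2 x ≤ 3 * √x := by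
  have hsx : 1 ≤ √x := Real.one_le_sqrt.mpr hx
  have hlog : Real.log x ≤ 2 * (√x - 1) := by
    linarith [Real.log_sqrt (by linarith : 0 ≤ x),
      Real.log_le_sub_one_of_pos (by linarith : 0 < √x)]
  have hlog2 : (2 : ℝ) / 3 ≤ Real.log 2 := by linarith [Real.log_two_gt_d9]
  have : logb 2 x ≤ 3 * (√x - 1) := by
    rw [logb, div_le_iff₀ (by positivity)]
    nlinarith
  linarith

lemma sqrt_div_three_le_div_one_add_logb {x : ℝ} (hx : 1 ≤ x) : √x / 3 ≤ x / (1 + logb 2 x) := by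
  have hl : 0 ≤ logb 2 x := Real.logb_nonneg (by norm_num) hx
  rw [div_le_div_iff₀ (by norm_num) (by linarith)]
  calc √x * (1 + logb 2 x) ≤ √x * (3 * √x) := by
        gcongr; exact one_add_logb_le_three_mul_sqrt hx
    _ = x * 3 := by rw [mul_left_comm, Real.mul_self_sqrt (by linarith), mul_comm]

lemma one_le_logb_natCast {n : ℕ} (hn : 2 ≤ n) : 1 ≤ logb 2 n := by
  rw [Real.le_logb_iff_rpow_le (by norm_num) (by positivity), Real.rpow_one]
  exact_mod_cast hn

lemma rpow_one_div_four_sq (t : ℕ) : ((t : ℝ) ^ ((1 : ℝ) / 4)) ^ 2 = √t := by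
  rw [← Real.rpow_natCast, ← Real.rpow_mul (by positivity), Real.sqrt_eq_rpow]
  norm_num

lemma one_le_bound_of_lt_sqrt_logb {M t : ℕ} (hM : 2 ≤ M) (ht : 2 ≤ t)
    (h : 3 * (t : ℝ) ^ ((1 : ℝ) / 4) < √(logb 2 M)) :
    1 ≤ 168 * (logb 2 t / (t : ℝ) ^ ((1 : ℝ) / 4)) *
      (logb 2 M / (1 + logb 2 (logb 2 M))) := by
  have hτ : 0 < (t : ℝ) ^ ((1 : ℝ) / 4) := by positivity
  have hcoef : 0 ≤ 168 * (logb 2 t / (t : ℝ) ^ ((1 : ℝ) / 4)) :=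
    mul_nonneg (by norm_num) (div_nonneg (by linarith [one_le_logb_natCast ht]) hτ.le)
  calc (1 : ℝ) ≤ 168 * (1 / (t : ℝ) ^ ((1 : ℝ) / 4)) * (t : ℝ) ^ ((1 : ℝ) / 4) := by
        rw [mul_assoc, one_div_mul_cancel hτ.ne']; norm_num
    _ ≤ 168 * (logb 2 t / (t : ℝ) ^ ((1 : ℝ) / 4)) * (√(logb 2 M) / 3) :=
        mul_le_mul (by gcongr; exact one_le_logb_natCast ht) (by linarith) hτ.le hcoef
    _ ≤ _ := mul_le_mul_of_nonneg_left
        (sqrt_div_three_le_div_one_add_logb (one_le_logb_natCast hM)) hcoef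

lemma log_div_sqrt_le_bound_of_sqrt_logb_le {M t : ℕ} (hM : 2 ≤ M) (ht : 2 ≤ t)
    (h : √(logb 2 M) ≤ 3 * (t : ℝ) ^ ((1 : ℝ) / 4)) :
    14 * (Nat.log 2 M + 1 : ℕ) / √t ≤ 168 * (logb 2 t / (t : ℝ) ^ ((1 : ℝ) / 4)) *
      (logb 2 M / (1 + logb 2 (logb 2 M))) := by
  have hlogb_pow : logb 2 ((t : ℝ) ^ 5) = 5 * logb 2 t := by rw [Real.logb_pow]; norm_num
  have hNat := Real.natLog_le_logb M 2
  push_cast at hNat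
  set x := logb 2 M
  set L := logb 2 t
  set τ := (t : ℝ) ^ ((1 : ℝ) / 4)
  have hx : 1 ≤ x := one_le_logb_natCast hM
  have hL : 1 ≤ L := one_le_logb_natCast ht
  have hτ : 1 ≤ τ := Real.one_le_rpow (by exact_mod_cast (by omega : 1 ≤ t)) (by norm_num)
  have hq : ((Nat.log 2 M + 1 : ℕ) : ℝ) ≤ 2 * x := by
    push_cast; linarith
  have hxt : x ≤ (t : ℝ) ^ 5 := by
    have h9 : 9 ≤ (t : ℝ) ^ 4 := by
      have : (2 : ℝ) ≤ t := by exact_mod_cast ht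
      nlinarith [pow_le_pow_left₀ (by norm_num) this 4]
    calc x = √x ^ 2 := (Real.sq_sqrt (by linarith)).symm
      _ ≤ (3 * τ) ^ 2 := by gcongr
      _ = 9 * √t := by rw [mul_pow, rpow_one_div_four_sq]; norm_num
      _ ≤ (t : ℝ) ^ 4 * t := by
          gcongr; exact Real.sqrt_le_self_iff.mpr (Or.inr (by exact_mod_cast (by omega : 1 ≤ t)))
      _ = (t : ℝ) ^ 5 := by ring
  have hl : 1 + logb 2 x ≤ 6 * L := by
    have : logb 2 x ≤ 5 * L := by
      calc logb 2 x ≤ logb 2 ((t : ℝ) ^ 5) :=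
            Real.logb_le_logb_of_le (by norm_num) (by linarith) hxt
        _ = 5 * L := hlogb_pow
    linarith
  have hl0 : 0 ≤ logb 2 x := Real.logb_nonneg (by norm_num) hx
  calc 14 * ((Nat.log 2 M + 1 : ℕ) : ℝ) / √t ≤ 28 * x / τ ^ 2 := by
        rw [rpow_one_div_four_sq]; exact div_le_div_of_nonneg_right (by linarith) (by positivity)
    _ ≤ 28 * x / τ := div_le_div_of_nonneg_left (by linarith) (by linarith) (by nlinarith)
    _ = 168 * (L / τ) * (x / (6 * L)) := by field_simp; norm_num
    _ ≤ 168 * (L / τ) * (x / (1 + logb 2 x)) := by gcongr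

end Estimates

section Discrepancy

def ExistsLowDiscSet (M t : ℕ) (D : ℝ) : Prop :=
  ∃ S : Finset ℕ, S.Nonempty ∧ (∀ s ∈ S, 1 ≤ s ∧ s ≤ M) ∧ S.card ≤ t ∧
    discM M S (fun s => (s : ℤ)) ≤ D

lemma ExistsLowDiscSet.mono {M t : ℕ} {D D' : ℝ} (h : ExistsLowDiscSet M t D) (hD : D ≤ D') :
    ExistsLowDiscSet M t D' :=
  let ⟨S, hS, hSM, hSt, hdisc⟩ := h
  ⟨S, hS, hSM, hSt, hdisc.trans hD⟩

lemma norm_exp_two_pi_I_div_pow {M : ℕ} (hM : M ≠ 0) (k : ℕ) :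
    ‖cexp (2 * π * I / M) ^ k‖ = 1 := by
  rw [norm_pow, (isPrimitiveRoot_exp M hM).norm'_eq_one hM, one_pow]

lemma geom_sum_exp_two_pi_I_div_pow_eq_zero {M k : ℕ} (hk : k ∈ Ico 1 M) :
    ∑ j ∈ range M, (cexp (2 * π * I / M) ^ k) ^ j = 0 := by
  obtain ⟨hk1, hkM⟩ := mem_Ico.mp hk
  have hω := isPrimitiveRoot_exp M (by omega)
  rw [geom_sum_eq (hω.pow_ne_one_of_pos_of_lt (by omega) hkM), ← pow_mul, mul_comm k M, pow_mul,
    hω.pow_eq_one, one_pow, sub_self, zero_div]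

lemma discM_le_of_norm_sum_le {M : ℕ} {S : Finset ℕ} {D : ℝ} (hD : 0 ≤ D)
    (h : ∀ k ∈ Ico 1 M, ‖∑ s ∈ S, (cexp (2 * π * I / M) ^ k) ^ s‖ ≤ D * #S) :
    discM M S (fun s => (s : ℤ)) ≤ D := by
  refine Real.sSup_le ?_ hD
  rintro _ ⟨k, hk1, hkM, rfl⟩
  have hexp (s : ℕ) :
      cexp (2 * π * I * k * ((s : ℤ) : ℂ) / M) = (cexp (2 * π * I / M) ^ k) ^ s := by
    rw [← pow_mul, ← Complex.exp_nat_mul]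
    push_cast
    ring_nf
  simp only [hexp, norm_div, Complex.norm_natCast]
  exact div_le_of_le_mul₀ (Nat.cast_nonneg _) hD (h k (mem_Ico.mpr ⟨hk1, by omega⟩))

lemma existsLowDiscSet_of_subset_range {M t : ℕ} {D : ℝ} (hD : 0 ≤ D) {S : Finset ℕ}
    (hSM : S ⊆ range M) (hS : S.Nonempty) (hSt : #S ≤ t)
    (h : ∀ k ∈ Ico 1 M, ‖∑ s ∈ S, (cexp (2 * π * I / M) ^ k) ^ s‖ ≤ D * #S) :
    ExistsLowDiscSet M t D := by
  have hM : M ≠ 0 := by obtain ⟨s, hs⟩ := hS; have := mem_range.mp (hSM hs); omega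
  refine ⟨S.map (addRightEmbedding 1), hS.map, fun s hs ↦ ?_, by rwa [card_map],
    discM_le_of_norm_sum_le hD fun k hk ↦ ?_⟩
  · obtain ⟨s, hs', rfl⟩ := mem_map.mp hs
    have := mem_range.mp (hSM hs')
    simp only [addRightEmbedding_apply]
    omega
  · simp only [sum_map, card_map, addRightEmbedding_apply, pow_succ, ← sum_mul, norm_mul,
      norm_exp_two_pi_I_div_pow hM, mul_one]
    exact h k hk

lemma existsLowDiscSet_zero {M t : ℕ} (hM : 0 < M) (hMt : M ≤ t) : ExistsLowDiscSet M t 0 :=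
  existsLowDiscSet_of_subset_range le_rfl subset_rfl (nonempty_range_iff.mpr hM.ne')
    (by rwa [card_range]) fun k hk ↦ by simp [geom_sum_exp_two_pi_I_div_pow_eq_zero hk]

lemma existsLowDiscSet_one {M t : ℕ} (hM : 0 < M) (ht : 0 < t) : ExistsLowDiscSet M t 1 :=
  existsLowDiscSet_of_subset_range zero_le_one (singleton_subset_iff.mpr (mem_range.mpr hM))
    (singleton_nonempty 0) (by rwa [card_singleton]) fun k _ ↦ by simp

lemma exists_block_dims {M t : ℕ} (ht : 2 ≤ t) (htM : t ≤ M) :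
    ∃ n m, 0 < n ∧ 0 < m ∧ n * m ≤ M ∧ M ≤ n * m + m ∧ n ≤ t ∧ t ≤ 4 * n := by
  have ha : 1 ≤ M / t := (Nat.one_le_div_iff (by omega)).mpr htM
  have h1 : t * (M / t) ≤ M := Nat.mul_div_le M t
  have h2 : M < t * (M / t + 1) := Nat.lt_mul_div_succ M (by omega)
  generalize M / t = a at ha h1 h2
  have h3 : M / (a + 1) * (a + 1) ≤ M := Nat.div_mul_le_self M _
  have h4 : M < (a + 1) * (M / (a + 1) + 1) := Nat.lt_mul_div_succ M (by omega)
  generalize M / (a + 1) = n at h3 h4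
  have hn : 0 < n := by nlinarith
  refine ⟨n, a + 1, hn, by omega, h3, by nlinarith, by nlinarith, ?_⟩
  by_contra! h
  nlinarith

theorem existsLowDiscSet_log {M t : ℕ} (ht : 2 ≤ t) (htM : t ≤ M) :
    ExistsLowDiscSet M t (14 * (Nat.log 2 M + 1 : ℕ) / √t) := by
  obtain ⟨n, m, hn, hm, hnm, hM, hnt, htn⟩ := exists_block_dims ht htM
  set q := Nat.log 2 M + 1
  have hs : #(Ico 1 M) ≤ 4 ^ q := by
    rw [Nat.card_Ico]
    calc M - 1 ≤ 2 ^ q := (Nat.sub_le M 1).trans (Nat.lt_pow_succ_log_self (by norm_num) M).le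
      _ ≤ 4 ^ q := Nat.pow_le_pow_left (by norm_num) q
  obtain ⟨S, hSM, hSn, hS⟩ := exists_subset_range_forall_norm_sum_pow_le (Ico 1 M)
    (fun k _ ↦ (norm_exp_two_pi_I_div_pow (by omega) k).le)
    (fun k hk ↦ geom_sum_exp_two_pi_I_div_pow_eq_zero hk) hn hm hnm hM (show 0 < q by omega) hs
  refine existsLowDiscSet_of_subset_range (by positivity) hSM
    (card_pos.mp (hSn ▸ hn)) (hSn ▸ hnt) fun k hk ↦ (hS k hk).trans ?_
  have hsqrt : √t ≤ 2 * √n := by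
    rw [show (2 : ℝ) = √4 by norm_num, ← Real.sqrt_mul (by norm_num)]
    exact Real.sqrt_le_sqrt (by exact_mod_cast htn)
  have hn' : (0 : ℝ) < √n := by positivity
  rw [hSn, div_mul_eq_mul_div, le_div_iff₀ (by positivity)]
  have hq : (0 : ℝ) ≤ q := by positivity
  nlinarith [Real.mul_self_sqrt (Nat.cast_nonneg (α := ℝ) n),
    mul_le_mul_of_nonneg_left hsqrt (mul_nonneg hq hn'.le)]

end Discrepancy

/-- Theorem 3.8 of the paper: an explicit low-discrepancy set. -/
theorem explicit_low_discrepancy_set :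
    ∃ Cstar : ℝ, 1 ≤ Cstar ∧
      ∀ M t : ℕ, 2 ≤ M → 2 ≤ t →
        ∃ S : Finset ℕ, S.Nonempty ∧ (∀ s ∈ S, 1 ≤ s ∧ s ≤ M) ∧ S.card ≤ t ∧
          discM M S (fun s => (s : ℤ)) ≤
            Cstar * (Real.logb 2 t / (t : ℝ) ^ ((1 : ℝ) / 4)) *
              (Real.logb 2 M / (1 + Real.logb 2 (Real.logb 2 M))) := by
  refine ⟨168, by norm_num, fun M t hM ht ↦ ?_⟩
  by_cases h : √(Real.logb 2 M) ≤ 3 * (t : ℝ) ^ ((1 : ℝ) / 4)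
  · have hbound := log_div_sqrt_le_bound_of_sqrt_logb_le hM ht h
    rcases le_or_gt M t with hMt | htM
    · exact (existsLowDiscSet_zero (by omega) hMt).mono
        ((by positivity : (0 : ℝ) ≤ 14 * (Nat.log 2 M + 1 : ℕ) / √t).trans hbound)
    · exact (existsLowDiscSet_log ht htM.le).mono hbound
  · exact (existsLowDiscSet_one (by omega) (by omega)).mono
      (one_le_bound_of_lt_sqrt_logb hM ht (not_le.mp h))
end

section
/- Fix integers D and B with 0 ≤ D < B, and let y ∈ {0,1}^B be a string with Hamming weight |y| > D. Then there is a function ζ_y : {0,1}^B → ℝ such that: (1) supp ζ_y ⊆ {x ∈ {0,1}^B : x ≤ y componentwise and |x| ≤ D} ∪ {y}; (2) ζ_y(y) = 1; (3) ‖ζ_y‖₁ ≤ 1 + 2^D·binom(B,D); (4) orth(ζ_y) > D. -/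
open scoped ENNReal

/-- Hamming weight of a Boolean vector. -/
def hw {ι : Type*} [Fintype ι] (x : ι → Bool) : ℕ :=
  (Finset.univ.filter fun i => x i = true).card

/-- Embedding of a Boolean point into `ℝ^ι`. -/
def breal {ι : Type*} (x : ι → Bool) : ι → ℝ := fun i => if x i then 1 else 0

/-- The orthogonal content of `φ`: the least total degree of a real polynomial having
nonzero inner product with `φ`; `⊤` if no such polynomial exists. -/
noncomputable def orthE {ι : Type*} [Fintype ι] [DecidableEq ι] (φ : (ι → Bool) → ℝ) : ℝ≥0∞ :=
  sInf {d : ℝ≥0∞ | ∃ p : MvPolynomial ι ℝ, (p.totalDegree : ℝ≥0∞) = d ∧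
    (∑ x : ι → Bool, φ x * MvPolynomial.eval (breal x) p) ≠ 0}

/-!
Identify `{0,1}^B` with the subsets of `Fin B`; let `Y` be the support of `y` and `m = |Y| > D`.
Put `ζ Y = 1` and `ζ T = -C(D - m, D - |T|)` for `T ⊆ Y` with `|T| ≤ D`, a binomial coefficient
with negative upper index. On the cube every polynomial of degree `≤ D` is a combination of
monomials `∏_{i ∈ S} x_i` with `|S| ≤ D`, and by Vandermonde's identity
`∑_{T ⊇ S} ζ T = 1 - ∑_t C(m - |S|, t) C(D - m, D - |S| - t) = 1 - C(D - |S|, D - |S|) = 0`.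
Since `|C(D - m, D - k)| = C(m - k - 1, D - k) ≤ C(m - k, D - k)`, the `ℓ¹` mass is at most
`1 + ∑_k C(m, k) C(m - k, D - k) = 1 + 2^D C(m, D) ≤ 1 + 2^D C(B, D)`.
-/

open Finset

theorem sum_range_choose_mul_ringChoose_sub (n d : ℕ) :
    ∑ t ∈ range (d + 1), (n.choose t : ℤ) * Ring.choose ((d : ℤ) - n) (d - t) = 1 := by
  have h := Ring.add_choose_eq (r := (n : ℤ)) (s := (d : ℤ) - n) d (Commute.all _ _)
  rw [add_sub_cancel, Ring.choose_natCast, Nat.choose_self, Nat.sum_antidiagonal_eq_sum_range_succ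
    (fun a b => Ring.choose (n : ℤ) a * Ring.choose ((d : ℤ) - n) b)] at h
  simpa only [Ring.choose_natCast, Nat.cast_one] using h.symm

theorem abs_ringChoose_sub {m D k : ℕ} (hDm : D < m) (hkD : k ≤ D) :
    |Ring.choose ((D : ℤ) - m) (D - k)| = (m - k - 1).choose (D - k) := by
  have h : ((D : ℤ) - m) = -((m - D : ℕ) : ℤ) := by push_cast [hDm.le]; ring
  have h' : ((m - D : ℕ) : ℤ) + (D - k : ℕ) - 1 = (m - k - 1 : ℕ) := by
    push_cast [hDm, hkD]; omega
  rw [h, Ring.choose_neg, h', Ring.choose_natCast, Units.smul_def, smul_eq_mul, abs_mul,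
    Int.abs_negOnePow, one_mul, Nat.abs_cast]

theorem sum_powerset_filter_card_le_apply_card {α M : Type*} [AddCommMonoid M] (P : Finset α)
    (e : ℕ) (g : ℕ → M) :
    ∑ U ∈ P.powerset with U.card ≤ e, g U.card = ∑ t ∈ range (e + 1), P.card.choose t • g t := by
  rw [sum_filter, sum_powerset_apply_card (fun k => if k ≤ e then g k else 0)]
  simp only [smul_ite, smul_zero]
  rw [← sum_filter]
  refine sum_subset (fun t ht => ?_) (fun t ht hnot => ?_)
  · simp only [mem_filter, mem_range] at ht ⊢; omega
  · simp only [mem_filter, mem_range, not_and, not_le] at ht hnot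
    rw [Nat.choose_eq_zero_of_lt (by omega), zero_smul]

theorem sum_Icc_filter_card_le_apply_card {α M : Type*} [DecidableEq α] [AddCommMonoid M]
    {S Y : Finset α} (hSY : S ⊆ Y) {D : ℕ} (hSD : S.card ≤ D) (f : ℕ → M) :
    ∑ T ∈ Icc S Y with T.card ≤ D, f T.card
      = ∑ t ∈ range (D - S.card + 1), (Y.card - S.card).choose t • f (S.card + t) := by
  have hdisj : ∀ U ∈ (Y \ S).powerset, Disjoint S U := fun U hU =>
    disjoint_of_subset_right (mem_powerset.mp hU) disjoint_sdiff
  have hcard : ∀ U ∈ (Y \ S).powerset, (S ∪ U).card = S.card + U.card := fun U hU =>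
    card_union_of_disjoint (hdisj U hU)
  rw [Icc_eq_image_powerset hSY, filter_image, sum_image fun U hU V hV hUV => ?_,
    ← card_sdiff_of_subset hSY, ← sum_powerset_filter_card_le_apply_card]
  · rw [filter_congr fun U hU => (hcard U hU).symm ▸ (le_tsub_iff_left hSD).symm]
    exact sum_congr rfl fun U hU => by rw [hcard U (mem_filter.mp hU).1]
  · rw [mem_coe, mem_filter] at hU hV
    rw [← union_sdiff_cancel_left (hdisj U hU.1), ← union_sdiff_cancel_left (hdisj V hV.1)]
    exact congrArg (· \ S) hUV

theorem sum_superset_ite_eq_sum_Icc_filter {α M : Type*} [Fintype α] [DecidableEq α]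
    [AddCommMonoid M] (S Y : Finset α) (D : ℕ) (g : Finset α → M) :
    ∑ T with S ⊆ T, (if T ⊆ Y ∧ T.card ≤ D then g T else 0) =
      ∑ T ∈ Icc S Y with T.card ≤ D, g T := by
  rw [sum_ite, sum_const_zero, add_zero, filter_filter]
  congr 1
  ext T
  simp [and_assoc]

theorem sum_range_choose_mul_choose_le {m N : ℕ} (hmN : m ≤ N) (D : ℕ) :
    ∑ k ∈ range (D + 1), m.choose k * (m - k - 1).choose (D - k) ≤ 2 ^ D * N.choose D :=
  calc ∑ k ∈ range (D + 1), m.choose k * (m - k - 1).choose (D - k)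
      ≤ ∑ k ∈ range (D + 1), N.choose D * D.choose k := by
        refine sum_le_sum fun k hk => ?_
        have hkD : k ≤ D := Nat.lt_succ_iff.mp (mem_range.mp hk)
        calc m.choose k * (m - k - 1).choose (D - k)
            ≤ m.choose k * (m - k).choose (D - k) :=
              Nat.mul_le_mul_left _ (Nat.choose_le_choose _ (by omega))
          _ = m.choose D * D.choose k := (Nat.choose_mul hkD).symm
          _ ≤ N.choose D * D.choose k := by gcongr
    _ = 2 ^ D * N.choose D := by rw [← mul_sum, Nat.sum_range_choose, mul_comm]

section Witness

variable {α : Type*} [DecidableEq α]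

def dualWitness (D : ℕ) (Y T : Finset α) : ℝ :=
  (if T = Y then 1 else 0) -
    if T ⊆ Y ∧ T.card ≤ D then ((Ring.choose ((D : ℤ) - Y.card) (D - T.card) : ℤ) : ℝ) else 0

variable {D : ℕ} {Y : Finset α}

theorem dualWitness_self (hY : D < Y.card) : dualWitness D Y Y = 1 := by
  simp [dualWitness, hY.not_ge]

theorem eq_or_subset_and_card_le_of_dualWitness_ne_zero {T : Finset α}
    (hT : dualWitness D Y T ≠ 0) : T = Y ∨ T ⊆ Y ∧ T.card ≤ D := by
  by_contra! h
  rw [dualWitness, if_neg h.1, if_neg fun h' => (h.2 h'.1).not_ge h'.2, sub_zero] at hT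
  exact hT rfl

variable [Fintype α]

theorem sum_superset_dualWitness {S : Finset α} (hS : S.card ≤ D) :
    ∑ T with S ⊆ T, dualWitness D Y T = 0 := by
  simp only [dualWitness]
  rw [sum_sub_distrib, sum_ite_eq', sum_superset_ite_eq_sum_Icc_filter]
  by_cases hSY : S ⊆ Y
  · rw [if_pos (by simpa using hSY), sum_Icc_filter_card_le_apply_card hSY hS
      (fun k => ((Ring.choose ((D : ℤ) - Y.card) (D - k) : ℤ) : ℝ))]
    have hvan := sum_range_choose_mul_ringChoose_sub (Y.card - S.card) (D - S.card)
    rw [Nat.cast_sub hS, Nat.cast_sub (card_le_card hSY), sub_sub_sub_cancel_right] at hvan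
    rw [sub_eq_zero, eq_comm]
    simpa only [nsmul_eq_mul, Nat.sub_sub, Int.cast_sum, Int.cast_mul, Int.cast_natCast,
      Int.cast_one] using congrArg (Int.cast : ℤ → ℝ) hvan
  · rw [if_neg (by simpa using hSY), Icc_eq_empty hSY, filter_empty, sum_empty, sub_zero]

theorem sum_abs_dualWitness_le (hY : D < Y.card) :
    ∑ T, |dualWitness D Y T| ≤ 1 + 2 ^ D * (Fintype.card α).choose D := by
  set c : ℕ → ℝ := fun k => ((Ring.choose ((D : ℤ) - Y.card) (D - k) : ℤ) : ℝ)
  calc ∑ T, |dualWitness D Y T|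
      ≤ ∑ T, ((if T = Y then 1 else 0) + if T ⊆ Y ∧ T.card ≤ D then |c T.card| else 0) :=
        sum_le_sum fun T _ => (abs_sub _ _).trans (by split_ifs <;> simp [c])
    _ = 1 + ∑ T ∈ Icc ∅ Y with T.card ≤ D, |c T.card| := by
        rw [sum_add_distrib, sum_ite_eq', if_pos (mem_univ _),
          ← sum_superset_ite_eq_sum_Icc_filter, filter_true_of_mem fun T _ => empty_subset T]
    _ = 1 + ∑ k ∈ range (D + 1), (Y.card.choose k * (Y.card - k - 1).choose (D - k) : ℕ) := by
        rw [sum_Icc_filter_card_le_apply_card (empty_subset Y) (Nat.zero_le D) (fun k => |c k|)]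
        push_cast
        refine congrArg (1 + ·) (sum_congr rfl fun k hk => ?_)
        simp only [card_empty, zero_add, Nat.sub_zero, nsmul_eq_mul, c]
        rw [← Int.cast_abs, abs_ringChoose_sub hY (Nat.lt_succ_iff.mp (mem_range.mp hk))]
        norm_cast
    _ ≤ 1 + 2 ^ D * (Fintype.card α).choose D := by
        gcongr
        exact_mod_cast sum_range_choose_mul_choose_le (card_le_univ Y) D

end Witness

theorem breal_pow {ι : Type*} (x : ι → Bool) (i : ι) {k : ℕ} (hk : k ≠ 0) :
    breal x i ^ k = breal x i := by
  have : IsIdempotentElem (breal x i) := by unfold IsIdempotentElem breal; split_ifs <;> norm_num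
  exact this.pow_eq hk

theorem eval_breal {ι : Type*} (x : ι → Bool) (p : MvPolynomial ι ℝ) :
    MvPolynomial.eval (breal x) p = ∑ d ∈ p.support, p.coeff d * ∏ i ∈ d.support, breal x i := by
  rw [MvPolynomial.eval_eq]
  refine sum_congr rfl fun d _ => congrArg _ (prod_congr rfl fun i hi => ?_)
  exact breal_pow x i (Finsupp.mem_support_iff.mp hi)

section Cube

variable {ι : Type*} [Fintype ι] [DecidableEq ι]

def cubeEquivFinset : (ι → Bool) ≃ Finset ι where
  toFun x := {i | x i = true}
  invFun T i := decide (i ∈ T)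
  left_inv x := by ext i; simp
  right_inv T := by ext i; simp

theorem hw_eq_card_cubeEquivFinset (x : ι → Bool) : hw x = (cubeEquivFinset x).card := rfl

theorem cubeEquivFinset_subset_iff {x y : ι → Bool} :
    cubeEquivFinset x ⊆ cubeEquivFinset y ↔ ∀ i, x i = true → y i = true := by
  simp [cubeEquivFinset, subset_iff]

theorem prod_breal (x : ι → Bool) (S : Finset ι) :
    ∏ i ∈ S, breal x i = if S ⊆ cubeEquivFinset x then 1 else 0 := by
  split_ifs with hS
  · exact prod_eq_one fun i hi => by simpa [breal, cubeEquivFinset] using hS hi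
  · obtain ⟨i, hiS, hix⟩ := not_subset.mp hS
    exact prod_eq_zero hiS (by simpa [breal, cubeEquivFinset] using hix)

theorem sum_mul_prod_breal (ψ : Finset ι → ℝ) (S : Finset ι) :
    ∑ x, ψ (cubeEquivFinset x) * ∏ i ∈ S, breal x i = ∑ T with S ⊆ T, ψ T := by
  simp only [prod_breal, mul_ite, mul_one, mul_zero, sum_filter]
  exact Equiv.sum_comp cubeEquivFinset fun T => if S ⊆ T then ψ T else 0

theorem sum_mul_eval_breal_eq_zero {φ : (ι → Bool) → ℝ} {D : ℕ}
    (hφ : ∀ S : Finset ι, S.card ≤ D → ∑ x, φ x * ∏ i ∈ S, breal x i = 0)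
    {p : MvPolynomial ι ℝ} (hp : p.totalDegree ≤ D) :
    ∑ x, φ x * MvPolynomial.eval (breal x) p = 0 := by
  simp only [eval_breal, mul_sum]
  rw [sum_comm]
  refine sum_eq_zero fun d hd => ?_
  have hcard : d.support.card ≤ D := by
    refine le_trans ?_ ((MvPolynomial.le_totalDegree hd).trans hp)
    simpa [Finsupp.sum] using card_nsmul_le_sum d.support d 1 fun i hi =>
      Nat.one_le_iff_ne_zero.mpr (Finsupp.mem_support_iff.mp hi)
  simp_rw [mul_left_comm (φ _), ← mul_sum, hφ _ hcard, mul_zero]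

theorem lt_orthE_of_forall_totalDegree_le {φ : (ι → Bool) → ℝ} {D : ℕ}
    (hφ : ∀ p : MvPolynomial ι ℝ, p.totalDegree ≤ D →
      ∑ x, φ x * MvPolynomial.eval (breal x) p = 0) :
    (D : ℝ≥0∞) < orthE φ := by
  refine (ENNReal.lt_add_right (ENNReal.natCast_ne_top D) one_ne_zero).trans_le (le_sInf ?_)
  rintro _ ⟨p, rfl, hp⟩
  exact_mod_cast Nat.succ_le_of_lt (not_le.mp fun h => hp (hφ p h))

end Cube

theorem razborov_sherstov_generalized_general (D B : ℕ)
    (y : Fin B → Bool) (hy : D < hw y) :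
    ∃ ζ : (Fin B → Bool) → ℝ,
      (∀ x, ζ x ≠ 0 → ((∀ i, x i = true → y i = true) ∧ hw x ≤ D) ∨ x = y) ∧
      ζ y = 1 ∧
      (∑ x : Fin B → Bool, |ζ x|) ≤ 1 + 2 ^ D * (B.choose D : ℝ) ∧
      (D : ℝ≥0∞) < orthE ζ := by
  rw [hw_eq_card_cubeEquivFinset] at hy
  refine ⟨fun x => dualWitness D (cubeEquivFinset y) (cubeEquivFinset x), fun x hx => ?_,
    dualWitness_self hy, ?_, ?_⟩
  · rcases eq_or_subset_and_card_le_of_dualWitness_ne_zero hx with hxy | ⟨hxy, hcard⟩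
    · exact Or.inr (cubeEquivFinset.injective hxy)
    · exact Or.inl ⟨cubeEquivFinset_subset_iff.mp hxy, hw_eq_card_cubeEquivFinset x ▸ hcard⟩
  · rw [Equiv.sum_comp cubeEquivFinset fun T => |dualWitness D (cubeEquivFinset y) T|]
    simpa only [Fintype.card_fin] using sum_abs_dualWitness_le hy
  · exact lt_orthE_of_forall_totalDegree_le fun p hp => sum_mul_eval_breal_eq_zero
      (fun S hS => (sum_mul_prod_breal _ S).trans (sum_superset_dualWitness hS)) hp

/-- Lemma 2.8 of the paper (generalized Razborov–Sherstov): for `0 ≤ D < B` and a string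
`y ∈ {0,1}^B` of Hamming weight `> D`, there is `ζ_y : {0,1}^B → ℝ` supported on
`{x ≤ y, |x| ≤ D} ∪ {y}` with `ζ_y(y) = 1`, `‖ζ_y‖₁ ≤ 1 + 2^D·C(B,D)`, and
`orth ζ_y > D`. -/
theorem razborov_sherstov_generalized (D B : ℕ) (hDB : D < B)
    (y : Fin B → Bool) (hy : D < hw y) :
    ∃ ζ : (Fin B → Bool) → ℝ,
      (∀ x, ζ x ≠ 0 → ((∀ i, x i = true → y i = true) ∧ hw x ≤ D) ∨ x = y) ∧
      ζ y = 1 ∧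
      (∑ x : Fin B → Bool, |ζ x|) ≤ 1 + 2 ^ D * (B.choose D : ℝ) ∧
      (D : ℝ≥0∞) < orthE ζ :=
  razborov_sherstov_generalized_general D B y hy
end

section
/- Let B be a positive integer, Φ : {0,1}^B → ℝ a function, and T ≥ D ≥ 0 integers. Then there is a function Φ̃ : {0,1}^B → ℝ such that: (1) supp Φ̃ ⊆ {x ∈ {0,1}^B : |x| ≤ T}; (2) orth(Φ − Φ̃) > D; (3) ‖Φ − Φ̃‖₁ ≤ (1 + 2^D·binom(B,D)) · Σ_{x : |x| > T} |Φ(x)|. -/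
open scoped ENNReal

/-!
For every point `z` of weight `> T`, subtract `Φ z` times a function `κ_z` that equals `1` at
`z`, is supported on `z` and on points of weight `≤ D` below `z`, and is orthogonal to every
polynomial of degree `≤ D`. As `D ≤ T`, this kills `Φ` on all points of weight `> T`, changes
it by a function of orthogonal content `> D`, and costs `‖κ_z‖₁ ≤ 1 + 2^D C(B, D)` per unit of
`|Φ z|`. Since every monomial is the indicator of `S ⊆ x` on the cube, orthogonality of `κ_z`
reduces to an alternating binomial identity.
-/

open Finset

theorem sum_neg_one_pow_mul_choose_mul_choose_eq_zero {R : Type*} [CommRing R] (N : ℕ) {d : ℕ}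
    (hd : d ≠ 0) :
    ∑ j ∈ range (d + 1),
      (-1 : R) ^ (d - j) * (N.choose j * (N - j).choose (d - j) : ℕ) = 0 := by
  have h := add_pow (1 : R) (-1) d
  rw [add_neg_cancel, zero_pow hd] at h
  simp only [one_pow, one_mul] at h
  rw [sum_congr rfl fun j hj => by
    rw [← Nat.choose_mul (Nat.le_of_lt_succ (mem_range.1 hj)), Nat.cast_mul, mul_left_comm],
    ← mul_sum, ← h, mul_zero]

-- The coefficient of `X ^ d` in `(1 - X) ^ (n + d + 1) * (1 - X) ^ (-(n + 1)) = (1 - X) ^ d`.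
theorem sum_neg_one_pow_mul_choose_mul_choose {R : Type*} [CommRing R] (n d : ℕ) :
    ∑ j ∈ range (d + 1),
      (-1 : R) ^ (d - j) * ((n + d + 1).choose j * (n + d - j).choose (d - j) : ℕ) = 1 := by
  induction d with
  | zero => simp
  | succ d ih =>
    have pascal : ∀ j ∈ range (d + 1),
        (-1 : R) ^ (d + 1 - (j + 1)) * ((n + (d + 1) + 1).choose (j + 1) *
          (n + (d + 1) - (j + 1)).choose (d + 1 - (j + 1)) : ℕ) =
        (-1 : R) ^ (d - j) * ((n + d + 1).choose j * (n + d - j).choose (d - j) : ℕ) +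
        (-1 : R) ^ (d + 1 - (j + 1)) * ((n + d + 1).choose (j + 1) *
          (n + d + 1 - (j + 1)).choose (d + 1 - (j + 1)) : ℕ) := by
      intro j _
      rw [show n + (d + 1) + 1 = n + d + 1 + 1 by ring, Nat.choose_succ_succ',
        show n + (d + 1) - (j + 1) = n + d - j by omega,
        show n + d + 1 - (j + 1) = n + d - j by omega, show d + 1 - (j + 1) = d - j by omega]
      push_cast; ring
    rw [sum_range_succ', sum_congr rfl pascal, sum_add_distrib, ih, add_assoc, add_eq_left]
    have := sum_neg_one_pow_mul_choose_mul_choose_eq_zero (R := R) (n + d + 1) d.succ_ne_zero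
    rwa [sum_range_succ'] at this

theorem Finset.sum_Icc_apply_card {ι M : Type*} [DecidableEq ι] [AddCommMonoid M] (f : ℕ → M)
    {s t : Finset ι} (h : s ⊆ t) :
    ∑ u ∈ Icc s t, f #u = ∑ j ∈ range (#t - #s + 1), (#t - #s).choose j • f (#s + j) := by
  have hdisj : ∀ u ∈ (t \ s).powerset, Disjoint s u := fun u hu =>
    disjoint_of_subset_right (mem_powerset.1 hu) disjoint_sdiff
  rw [Icc_eq_image_powerset h, sum_image fun u hu v hv huv => ?_,
    sum_congr rfl fun u hu => by rw [card_union_of_disjoint (hdisj u hu)],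
    sum_powerset_apply_card (fun j => f (#s + j)), card_sdiff_of_subset h]
  simpa only [union_sdiff_cancel_left (hdisj u hu), union_sdiff_cancel_left (hdisj v hv)]
    using congrArg (· \ s) huv

/-- The value of `κ_z` at a point of weight `k` below `z`, where `m = |z|`: it is
`(-1) ^ (m - k) r(k)` for the polynomial `r` of degree `m - D - 1` vanishing at `D + 1, …, m - 1`
with `r(m) = 1`, because alternating signs over an `m`-dimensional cube kill every polynomial of
degree `< m`. -/
def cancelProfile (D m k : ℕ) : ℝ :=
  if k = m then 1 else if k ≤ D then -(-1) ^ (D - k) * (m - 1 - k).choose (D - k) else 0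

theorem sum_choose_smul_cancelProfile {D m s : ℕ} (hsD : s ≤ D) (hDm : D < m) :
    ∑ j ∈ range (m - s + 1), (m - s).choose j • cancelProfile D m (s + j) = 0 := by
  obtain ⟨n, d, rfl, rfl⟩ : ∃ n d, D = s + d ∧ m = s + d + n + 1 :=
    ⟨m - D - 1, D - s, by omega, by omega⟩
  have low : ∀ j ∈ range (d + 1),
      (n + d + 1).choose j • cancelProfile (s + d) (s + d + n + 1) (s + j) =
        -((-1 : ℝ) ^ (d - j) * ((n + d + 1).choose j * (n + d - j).choose (d - j) : ℕ)) := by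
    intro j hj
    have hj := mem_range.1 hj
    rw [cancelProfile, if_neg (by omega), if_pos (by omega), nsmul_eq_mul,
      show s + d - (s + j) = d - j by omega,
      show s + d + n + 1 - 1 - (s + j) = n + d - j by omega]
    push_cast; ring
  have high : ∀ j ∈ range (n + d + 1), j ∉ range (d + 1) →
      (n + d + 1).choose j • cancelProfile (s + d) (s + d + n + 1) (s + j) = 0 := by
    intro j hj hjd
    simp only [mem_range] at hj hjd
    rw [cancelProfile, if_neg (by omega), if_neg (by omega), smul_zero]
  rw [show s + d + n + 1 - s = n + d + 1 by omega, sum_range_succ,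
    ← sum_subset (range_subset_range.2 (by omega)) high, sum_congr rfl low, sum_neg_distrib,
    sum_neg_one_pow_mul_choose_mul_choose, cancelProfile, if_pos (by omega)]
  simp

theorem sum_choose_smul_abs_cancelProfile_le {D m : ℕ} (hDm : D < m) :
    ∑ j ∈ range (m + 1), m.choose j • |cancelProfile D m j| ≤ 1 + 2 ^ D * m.choose D := by
  have low : ∀ j ∈ range (D + 1), m.choose j • |cancelProfile D m j|
      = (m.choose j * (m - 1 - j).choose (D - j) : ℕ) := by
    intro j hj
    have hj := mem_range.1 hj
    rw [cancelProfile, if_neg (by omega), if_pos (by omega), abs_mul, abs_neg, abs_pow, abs_neg,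
      abs_one, one_pow, one_mul, Nat.abs_cast, nsmul_eq_mul, Nat.cast_mul]
  have high : ∀ j ∈ range m, j ∉ range (D + 1) →
      m.choose j • |cancelProfile D m j| = 0 := by
    intro j hj hjD
    simp only [mem_range] at hj hjD
    rw [cancelProfile, if_neg (by omega), if_neg (by omega), abs_zero, smul_zero]
  have term_le : ∀ j ∈ range (D + 1),
      m.choose j * (m - 1 - j).choose (D - j) ≤ m.choose D * D.choose j := fun j hj =>
    calc m.choose j * (m - 1 - j).choose (D - j)
        ≤ m.choose j * (m - j).choose (D - j) :=
          Nat.mul_le_mul_left _ (Nat.choose_le_choose _ (by omega))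
      _ = m.choose D * D.choose j := (Nat.choose_mul (Nat.le_of_lt_succ (mem_range.1 hj))).symm
  rw [sum_range_succ, ← sum_subset (range_subset_range.2 (by omega)) high, sum_congr rfl low,
    cancelProfile, if_pos rfl, Nat.choose_self, abs_one, one_smul, add_comm]
  gcongr
  calc ∑ j ∈ range (D + 1), ((m.choose j * (m - 1 - j).choose (D - j) : ℕ) : ℝ)
      ≤ ∑ j ∈ range (D + 1), ((m.choose D * D.choose j : ℕ) : ℝ) :=
        sum_le_sum fun j hj => Nat.cast_le.2 (term_le j hj)
    _ = 2 ^ D * m.choose D := by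
        rw [← Nat.cast_sum, ← mul_sum, Nat.sum_range_choose]; push_cast; ring

def boolFunEquivFinset (ι : Type*) [Fintype ι] [DecidableEq ι] :
    (ι → Bool) ≃ Finset ι where
  toFun x := {i | x i = true}
  invFun s i := decide (i ∈ s)
  left_inv x := by ext i; simp
  right_inv s := by ext i; simp

section Cube

variable {ι : Type*} [Fintype ι] [DecidableEq ι]

theorem mem_boolFunEquivFinset {x : ι → Bool} {i : ι} :
    i ∈ boolFunEquivFinset ι x ↔ x i = true := by
  simp [boolFunEquivFinset]

theorem hw_eq_card (x : ι → Bool) : hw x = #(boolFunEquivFinset ι x) := rfl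

theorem eval_breal_s18 (x : ι → Bool) (p : MvPolynomial ι ℝ) :
    MvPolynomial.eval (breal x) p =
      ∑ m ∈ p.support, if m.support ⊆ boolFunEquivFinset ι x then p.coeff m else 0 := by
  rw [MvPolynomial.eval_eq]
  refine sum_congr rfl fun m _ => ?_
  split_ifs with h
  · rw [prod_eq_one fun i hi => ?_, mul_one]
    simp [breal, mem_boolFunEquivFinset.1 (h hi)]
  · obtain ⟨i, hi, hix⟩ := not_subset.1 h
    rw [prod_eq_zero hi, mul_zero]
    simp [breal, mem_boolFunEquivFinset.not.1 hix, Finsupp.mem_support_iff.1 hi]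

theorem lt_orthE_iff {φ : (ι → Bool) → ℝ} {D : ℕ} :
    (D : ℝ≥0∞) < orthE φ ↔ ∀ p : MvPolynomial ι ℝ, p.totalDegree ≤ D →
      ∑ x, φ x * MvPolynomial.eval (breal x) p = 0 := by
  constructor
  · intro h p hp
    by_contra hne
    exact (h.trans_le (sInf_le ⟨p, rfl, hne⟩)).not_ge (by exact_mod_cast hp)
  · intro h
    refine (ENNReal.lt_add_right (ENNReal.natCast_ne_top D) one_ne_zero).trans_le (le_sInf ?_)
    rintro _ ⟨p, rfl, hne⟩
    exact_mod_cast Nat.succ_le_of_lt (not_le.1 fun hp => hne (h p hp))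

theorem lt_orthE_of_forall_subset {φ : (ι → Bool) → ℝ} {D : ℕ}
    (h : ∀ S : Finset ι, #S ≤ D → ∑ x with S ⊆ boolFunEquivFinset ι x, φ x = 0) :
    (D : ℝ≥0∞) < orthE φ := by
  refine lt_orthE_iff.2 fun p hp => ?_
  simp_rw [eval_breal_s18, mul_sum, mul_ite, mul_zero]
  rw [sum_comm]
  refine sum_eq_zero fun m hm => ?_
  have hcard : #m.support ≤ D := by
    refine le_trans ?_ ((MvPolynomial.le_totalDegree hm).trans hp)
    rw [card_eq_sum_ones, Finsupp.sum]
    exact sum_le_sum fun i hi => Nat.one_le_iff_ne_zero.2 (Finsupp.mem_support_iff.1 hi)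
  rw [← sum_filter, ← sum_mul, h _ hcard, zero_mul]

end Cube

section Cancelling

variable {ι : Type*} [DecidableEq ι]

def cancelling (D : ℕ) (Z A : Finset ι) : ℝ :=
  if A ⊆ Z then cancelProfile D #Z #A else 0

theorem cancelling_self (D : ℕ) (Z : Finset ι) : cancelling D Z Z = 1 := by
  simp [cancelling, cancelProfile]

theorem cancelling_eq_zero {D : ℕ} {Z A : Finset ι} (hAZ : A ≠ Z) (hA : D < #A) :
    cancelling D Z A = 0 := by
  unfold cancelling
  split_ifs with h
  · rw [cancelProfile, if_neg fun hc => hAZ (eq_of_subset_of_card_le h hc.ge), if_neg (by omega)]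
  · rfl

variable [Fintype ι]

theorem sum_filter_subset_cancelling {D : ℕ} {Z S : Finset ι} (hZ : D < #Z) (hS : #S ≤ D) :
    ∑ A with S ⊆ A, cancelling D Z A = 0 := by
  have h_Icc : ∑ A with S ⊆ A, cancelling D Z A = ∑ A ∈ Icc S Z, cancelProfile D #Z #A := by
    rw [← sum_subset (fun A hA => mem_filter.2 ⟨mem_univ A, (mem_Icc.1 hA).1⟩)
      fun A hA hA' => by rw [cancelling, if_neg fun h => hA' (mem_Icc.2 ⟨(mem_filter.1 hA).2, h⟩)]]
    exact sum_congr rfl fun A hA => by rw [cancelling, if_pos (mem_Icc.1 hA).2]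
  rw [h_Icc]
  by_cases hSZ : S ⊆ Z
  · rw [sum_Icc_apply_card _ hSZ]
    exact sum_choose_smul_cancelProfile hS hZ
  · rw [Icc_eq_empty hSZ, sum_empty]

theorem sum_abs_cancelling_le {D : ℕ} {Z : Finset ι} (hZ : D < #Z) :
    ∑ A, |cancelling D Z A| ≤ 1 + 2 ^ D * (Fintype.card ι).choose D := by
  have h_powerset : ∑ A, |cancelling D Z A| = ∑ A ∈ Z.powerset, |cancelProfile D #Z #A| := by
    rw [← sum_subset (subset_univ Z.powerset) fun A _ hA => by
      rw [cancelling, if_neg (mem_powerset.not.1 hA), abs_zero]]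
    exact sum_congr rfl fun A hA => by rw [cancelling, if_pos (mem_powerset.1 hA)]
  calc ∑ A, |cancelling D Z A|
      = ∑ j ∈ range (#Z + 1), (#Z).choose j • |cancelProfile D #Z j| := by
        rw [h_powerset, sum_powerset_apply_card fun k => |cancelProfile D #Z k|]
    _ ≤ 1 + 2 ^ D * (#Z).choose D := sum_choose_smul_abs_cancelProfile_le hZ
    _ ≤ 1 + 2 ^ D * (Fintype.card ι).choose D := by
        gcongr
        exact card_le_univ Z

end Cancelling

theorem exists_lowWeight_of_cancelling {ι : Type*} [Fintype ι] [DecidableEq ι]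
    (Φ : (ι → Bool) → ℝ) (T D : ℕ) (C : ℝ)
    (κ : (ι → Bool) → (ι → Bool) → ℝ)
    (hself : ∀ z, T < hw z → κ z z = 1)
    (hzero : ∀ z x, T < hw z → T < hw x → x ≠ z → κ z x = 0)
    (horth : ∀ z, T < hw z → (D : ℝ≥0∞) < orthE (κ z))
    (hnorm : ∀ z, T < hw z → ∑ x, |κ z x| ≤ C) :
    ∃ Φ' : (ι → Bool) → ℝ,
      (∀ x, Φ' x ≠ 0 → hw x ≤ T) ∧
      (D : ℝ≥0∞) < orthE (fun x => Φ x - Φ' x) ∧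
      (∑ x, |Φ x - Φ' x|) ≤ C * ∑ x with T < hw x, |Φ x| := by
  set Ψ : (ι → Bool) → ℝ := fun x => ∑ z with T < hw z, Φ z * κ z x
  refine ⟨fun x => Φ x - Ψ x, fun x hx => ?_, ?_, ?_⟩
  · by_contra! hxT
    have hΨ : ∑ z with T < hw z, Φ z * κ z x = Φ x := by
      rw [sum_eq_single_of_mem x (mem_filter.2 ⟨mem_univ x, hxT⟩) fun z hz hzx => by
        rw [hzero z x (mem_filter.1 hz).2 hxT hzx.symm, mul_zero], hself x hxT, mul_one]
    exact hx (sub_eq_zero.2 hΨ.symm)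
  · simp only [sub_sub_cancel]
    refine lt_orthE_iff.2 fun p hp => ?_
    simp_rw [Ψ, sum_mul, mul_assoc]
    rw [sum_comm]
    refine sum_eq_zero fun z hz => ?_
    rw [← mul_sum, lt_orthE_iff.1 (horth z (mem_filter.1 hz).2) p hp, mul_zero]
  · simp only [sub_sub_cancel]
    calc ∑ x, |Ψ x|
        ≤ ∑ x, ∑ z with T < hw z, |Φ z| * |κ z x| :=
          sum_le_sum fun x _ => (abs_sum_le_sum_abs _ _).trans_eq (by simp_rw [abs_mul])
      _ = ∑ z with T < hw z, |Φ z| * ∑ x, |κ z x| := by rw [sum_comm]; simp_rw [mul_sum]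
      _ ≤ ∑ z with T < hw z, |Φ z| * C :=
          sum_le_sum fun z hz =>
            mul_le_mul_of_nonneg_left (hnorm z (mem_filter.1 hz).2) (abs_nonneg _)
      _ = C * ∑ z with T < hw z, |Φ z| := by rw [← sum_mul, mul_comm]

theorem zero_high_hamming_weight_general (B : ℕ)
    (Φ : (Fin B → Bool) → ℝ) (T D : ℕ) (hTD : D ≤ T) :
    ∃ Φ' : (Fin B → Bool) → ℝ,
      (∀ x, Φ' x ≠ 0 → hw x ≤ T) ∧
      (D : ℝ≥0∞) < orthE (fun x => Φ x - Φ' x) ∧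
      (∑ x : Fin B → Bool, |Φ x - Φ' x|) ≤
        (1 + 2 ^ D * (B.choose D : ℝ)) *
          ∑ x ∈ Finset.univ.filter (fun x : Fin B → Bool => T < hw x), |Φ x| := by
  set e := boolFunEquivFinset (Fin B)
  refine exists_lowWeight_of_cancelling Φ T D _ (fun z x => cancelling D (e z) (e x))
    (fun z _ => cancelling_self D (e z)) ?_ ?_ ?_
  · intro z x _ hx hxz
    exact cancelling_eq_zero (e.injective.ne hxz) (by rw [← hw_eq_card]; omega)
  · intro z hz
    refine lt_orthE_of_forall_subset fun S hS => ?_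
    have h := sum_filter_subset_cancelling (Z := e z) (by rw [← hw_eq_card]; omega) hS
    rw [sum_filter] at h ⊢
    exact (e.sum_comp fun A => if S ⊆ A then cancelling D (e z) A else 0).trans h
  · intro z hz
    rw [e.sum_comp fun A => |cancelling D (e z) A|]
    simpa using sum_abs_cancelling_le (Z := e z) (by rw [← hw_eq_card]; omega)

/-- Lemma 2.9 of the paper: zeroing out the high-Hamming-weight part of a dual object. -/
theorem zero_high_hamming_weight (B : ℕ) (hB : 0 < B)
    (Φ : (Fin B → Bool) → ℝ) (T D : ℕ) (hTD : D ≤ T) :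
    ∃ Φ' : (Fin B → Bool) → ℝ,
      (∀ x, Φ' x ≠ 0 → hw x ≤ T) ∧
      (D : ℝ≥0∞) < orthE (fun x => Φ x - Φ' x) ∧
      (∑ x : Fin B → Bool, |Φ x - Φ' x|) ≤
        (1 + 2 ^ D * (B.choose D : ℝ)) *
          ∑ x ∈ Finset.univ.filter (fun x : Fin B → Bool => T < hw x), |Φ x| :=
  zero_high_hamming_weight_general B Φ T D hTD
end

section
/- Let n, k, θ, D, T be positive integers with T ≥ n + D and T ≥ θk. Let y = (y_1, …, y_θ) ∈ ({0,1}^n)^θ with total Hamming weight |y| > T. Then there exists a function ζ_y : ({0,1}^n)^θ → ℝ such that: (1) supp ζ_y ⊆ {x : |x| ≤ T} ∪ {y}; (2) ζ_y(y) = 1; (3) orth(ζ_y) > D; (4) ‖ζ_y‖₁ ≤ 1 + 2^D·binom(n(θ−1), D); (5) ζ_y(x) = 0 whenever x = (x_1, …, x_θ) satisfies |x_i| ≤ k for every i ∈ {1, …, θ}. -/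
open scoped ENNReal

/-!
Since `|y| > T ≥ θk`, some block `i` of `y` has weight `> k`. Let `B` be the set of ones of `y`
outside block `i`, so `|B| ≥ |y| - n > D`. The corrector is `δ_y` plus a combination of point
masses at the points `patch y B u` (`u ⊆ B`, `|u| ≤ D`) obtained from `y` by switching off `B \ u`;
these agree with `y` on block `i` and have weight `≤ n + D ≤ T`. Pairing with a monomial `x^S`,
`|S| ≤ D`, reduces to `∑_{S ∩ B ⊆ u} c(|u|) = -1`, which after counting by cardinality is the
Chu–Vandermonde identity `∑_t C(M, t) C(R - M, R - t) = C(R, R)` with a negative upper index.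
The `ℓ₁` bound comes from `C(w, s) C(w - s - 1, D - s) ≤ C(w, D) C(D, s)`.
-/

open Finset

section Binomial

theorem sum_choose_mul_neg_one_pow_mul_choose {M R : ℕ} (h : R < M) :
    ∑ t ∈ range (R + 1), (M.choose t : ℤ) * ((-1) ^ (R - t) * (M - 1 - t).choose (R - t)) = 1 := by
  -- `C(-m, j) = (-1)^j C(m + j - 1, j)` turns the summands into those of Chu–Vandermonde.
  have vandermonde := Ring.add_choose_eq (r := (M : ℤ)) (s := -((M - R - 1 : ℕ) + 1 : ℤ)) R
    (Commute.all _ _)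
  rw [show (M : ℤ) + -((M - R - 1 : ℕ) + 1 : ℤ) = R by omega, Ring.choose_natCast,
    Nat.choose_self, Nat.cast_one, Nat.sum_antidiagonal_eq_sum_range_succ_mk] at vandermonde
  refine (sum_congr rfl fun t ht => ?_).trans vandermonde.symm
  have ht : t ≤ R := Nat.lt_succ_iff.mp (mem_range.mp ht)
  rw [Ring.choose_natCast, Ring.choose_neg, Int.negOnePow_def, Units.smul_def,
    show ((M - R - 1 : ℕ) : ℤ) + 1 + (R - t : ℕ) - 1 = ((M - 1 - t : ℕ) : ℤ) by omega,
    Ring.choose_natCast]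
  simp

/-- `correctorCoeff w D s` is the value at weight `s` of `z ↦ (-1)^|z| ∏_{j=D+1}^{w-1} (j - |z|)`
on `{0,1}^w`, normalized to `1` at weight `w`: this function is orthogonal to every polynomial of
degree `≤ D` and vanishes on the levels strictly between `D` and `w`. -/
def correctorCoeff (w D s : ℕ) : ℝ := (-1) ^ (D - s + 1) * (w - s - 1).choose (D - s)

theorem correctorCoeff_add (w D s t : ℕ) :
    correctorCoeff w D (t + s) = correctorCoeff (w - s) (D - s) t := by
  unfold correctorCoeff
  rw [show D - (t + s) = D - s - t by omega, show w - (t + s) - 1 = w - s - t - 1 by omega]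

theorem sum_choose_mul_correctorCoeff {w D : ℕ} (h : D < w) :
    ∑ t ∈ range (D + 1), (w.choose t : ℝ) * correctorCoeff w D t = -1 := by
  have := congrArg ((↑) : ℤ → ℝ) (sum_choose_mul_neg_one_pow_mul_choose h)
  push_cast at this
  rw [← this, ← sum_neg_distrib]
  refine sum_congr rfl fun t _ => ?_
  rw [correctorCoeff, show w - t - 1 = w - 1 - t by omega]
  ring

theorem sum_choose_mul_abs_correctorCoeff_le (w D : ℕ) :
    ∑ t ∈ range (D + 1), (w.choose t : ℝ) * |correctorCoeff w D t| ≤ 2 ^ D * w.choose D := by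
  calc ∑ t ∈ range (D + 1), (w.choose t : ℝ) * |correctorCoeff w D t|
      ≤ ∑ t ∈ range (D + 1), (w.choose D : ℝ) * D.choose t := by
        refine sum_le_sum fun t ht => ?_
        have ht : t ≤ D := Nat.lt_succ_iff.mp (mem_range.mp ht)
        rw [correctorCoeff, abs_mul, abs_pow, abs_neg, abs_one, one_pow, one_mul, Nat.abs_cast]
        exact_mod_cast (Nat.mul_le_mul_left _ (Nat.choose_le_choose _ (Nat.sub_le _ 1))).trans
          (Nat.choose_mul ht).ge
    _ = 2 ^ D * w.choose D := by
        rw [← mul_sum, mul_comm]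
        exact_mod_cast congrArg (· * w.choose D) (Nat.sum_range_choose D)

theorem sum_powerset_filter_card_le {α : Type*} (C : Finset α) (R : ℕ) (f : ℕ → ℝ) :
    ∑ u ∈ C.powerset with #u ≤ R, f #u = ∑ t ∈ range (R + 1), ((#C).choose t : ℝ) * f t := by
  rw [← sum_fiberwise_of_maps_to (g := card) (t := range (R + 1))
    fun u hu => mem_range.mpr (Nat.lt_succ_of_le (mem_filter.mp hu).2)]
  refine sum_congr rfl fun t ht => ?_
  rw [← card_powersetCard, ← nsmul_eq_mul, ← sum_const]
  refine sum_congr ?_ fun u hu => by rw [(mem_powersetCard.mp hu).2]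
  ext u
  simp only [mem_filter, mem_powerset, mem_powersetCard]
  have := mem_range.mp ht
  constructor
  · rintro ⟨⟨h1, _⟩, h2⟩; exact ⟨h1, h2⟩
  · rintro ⟨h1, rfl⟩; exact ⟨⟨h1, by omega⟩, rfl⟩

theorem sum_superset_correctorCoeff {α : Type*} [DecidableEq α] {D : ℕ} {S B : Finset α}
    (hSB : S ⊆ B) (hS : #S ≤ D) (hB : D < #B) :
    ∑ u ∈ B.powerset with #u ≤ D ∧ S ⊆ u, correctorCoeff #B D #u = -1 := by
  have reindex : ∑ u ∈ B.powerset with #u ≤ D ∧ S ⊆ u, correctorCoeff #B D #u =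
      ∑ v ∈ (B \ S).powerset with #v ≤ D - #S, correctorCoeff #B D (#v + #S) := by
    have hdisj : ∀ v ⊆ B \ S, Disjoint v S := fun v hv => disjoint_of_subset_left hv sdiff_disjoint
    refine sum_nbij' (· \ S) (· ∪ S) (fun u hu => ?_) (fun v hv => ?_) (fun u hu => ?_)
      (fun v hv => ?_) (fun u hu => ?_)
    · obtain ⟨huB, huD, hSu⟩ := by simpa using hu
      have := card_le_card hSu
      simp only [mem_filter, mem_powerset, card_sdiff_of_subset hSu]
      exact ⟨sdiff_subset_sdiff huB le_rfl, by omega⟩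
    · obtain ⟨hvB, hvD⟩ := by simpa using hv
      simp only [mem_filter, mem_powerset, card_union_of_disjoint (hdisj v hvB)]
      exact ⟨union_subset (hvB.trans sdiff_subset) hSB, by omega, subset_union_right⟩
    · exact sdiff_union_of_subset (mem_filter.mp hu).2.2
    · exact union_sdiff_cancel_right (hdisj v (mem_powerset.mp (mem_filter.mp hv).1))
    · have hSu := (mem_filter.mp hu).2.2
      rw [card_sdiff_of_subset hSu, Nat.sub_add_cancel (card_le_card hSu)]
  rw [reindex, sum_powerset_filter_card_le _ _ fun t => correctorCoeff #B D (t + #S),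
    card_sdiff_of_subset hSB]
  simp_rw [correctorCoeff_add]
  exact sum_choose_mul_correctorCoeff (by omega)

end Binomial

theorem MvPolynomial.card_support_le_totalDegree {σ R : Type*} [CommSemiring R]
    {p : MvPolynomial σ R} {d : σ →₀ ℕ} (hd : d ∈ p.support) : #d.support ≤ p.totalDegree := by
  refine le_trans ?_ (MvPolynomial.le_totalDegree hd)
  simpa [Finsupp.sum] using card_nsmul_le_sum d.support d 1 fun i hi => Nat.one_le_iff_ne_zero.mpr
    (Finsupp.mem_support_iff.mp hi)

theorem sum_abs_sum_mul_ite_eq_le {α β : Type*} [Fintype α] [DecidableEq α] (s : Finset β)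
    (c : β → ℝ) (p : β → α) :
    ∑ x, |∑ u ∈ s, c u * if x = p u then 1 else 0| ≤ ∑ u ∈ s, |c u| := by
  calc ∑ x, |∑ u ∈ s, c u * if x = p u then 1 else 0|
      ≤ ∑ x, ∑ u ∈ s, |c u| * if x = p u then 1 else 0 := by
        refine sum_le_sum fun x _ => (abs_sum_le_sum_abs _ _).trans_eq (sum_congr rfl fun u _ => ?_)
        split_ifs <;> simp
    _ = ∑ u ∈ s, |c u| := by simp [sum_comm (s := univ)]

section Cube

variable {ι : Type*} [Fintype ι]

def onesOf (x : ι → Bool) : Finset ι := {i | x i = true}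

variable [DecidableEq ι]

theorem prod_breal_pow (x : ι → Bool) (d : ι →₀ ℕ) :
    ∏ i ∈ d.support, breal x i ^ d i = if d.support ⊆ onesOf x then 1 else 0 := by
  split_ifs with h
  · refine prod_eq_one fun i hi => ?_
    simp [breal, show x i = true by simpa [onesOf] using h hi]
  · obtain ⟨i, hi, hxi⟩ := not_subset.mp h
    refine prod_eq_zero hi ?_
    simp [breal, show x i = false by simpa [onesOf] using hxi, Finsupp.mem_support_iff.mp hi]

theorem lt_orthE_of_forall_sum_mul_eq_zero {φ : (ι → Bool) → ℝ} {D : ℕ}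
    (h : ∀ S : Finset ι, #S ≤ D → ∑ x, φ x * (if S ⊆ onesOf x then 1 else 0) = 0) :
    (D : ℝ≥0∞) < orthE φ := by
  refine (ENNReal.lt_add_right (ENNReal.natCast_ne_top D) one_ne_zero).trans_le (le_sInf ?_)
  rintro _ ⟨p, rfl, hp⟩
  suffices D < p.totalDegree by exact_mod_cast Nat.succ_le_of_lt this
  by_contra! hdeg
  refine hp ?_
  simp_rw [MvPolynomial.eval_eq, prod_breal_pow, mul_sum]
  rw [sum_comm]
  refine sum_eq_zero fun d hd => ?_
  simp_rw [mul_left_comm _ (p.coeff d), ← mul_sum]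
  rw [h _ ((MvPolynomial.card_support_le_totalDegree hd).trans hdeg), mul_zero]

def patch (y : ι → Bool) (B u : Finset ι) : ι → Bool :=
  fun c => if c ∈ B then decide (c ∈ u) else y c

variable {y : ι → Bool} {B u : Finset ι}

theorem onesOf_patch (hu : u ⊆ B) : onesOf (patch y B u) = onesOf y \ B ∪ u := by
  ext c
  by_cases hc : c ∈ B
  · simp [onesOf, patch, hc]
  · simp [onesOf, patch, hc, show c ∉ u from fun h => hc (hu h)]

theorem hw_patch_add_card (hB : B ⊆ onesOf y) (hu : u ⊆ B) :
    hw (patch y B u) + #B = hw y + #u := by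
  change #(onesOf _) + #B = #(onesOf y) + #u
  rw [onesOf_patch hu, card_union_of_disjoint (disjoint_sdiff_self_left.mono_right hu),
    card_sdiff_of_subset hB]
  have := card_le_card hB
  omega

theorem subset_onesOf_patch_iff (hB : B ⊆ onesOf y) (hu : u ⊆ B) {S : Finset ι} :
    S ⊆ onesOf (patch y B u) ↔ S ⊆ onesOf y ∧ S ∩ B ⊆ u := by
  rw [onesOf_patch hu]
  constructor
  · intro h
    refine ⟨h.trans (union_subset sdiff_subset (hu.trans hB)), fun c hc => ?_⟩
    obtain ⟨hcS, hcB⟩ := mem_inter.mp hc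
    simpa [hcB] using h hcS
  · rintro ⟨hSy, hSu⟩ c hcS
    by_cases hcB : c ∈ B
    · exact mem_union_right _ (hSu (mem_inter.mpr ⟨hcS, hcB⟩))
    · exact mem_union_left _ (mem_sdiff.mpr ⟨hSy hcS, hcB⟩)

theorem patch_ne_of_card_lt (hB : B ⊆ onesOf y) (hu : #u < #B) : patch y B u ≠ y := by
  obtain ⟨c, hcB, hcu⟩ := exists_mem_notMem_of_card_lt_card hu
  intro h
  have := congrFun h c
  simp only [patch, hcB, hcu, if_true, decide_false] at this
  simpa [onesOf, ← this] using hB hcB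

end Cube

section Corrector

variable {ι : Type*} [Fintype ι] [DecidableEq ι]

def corrector (y : ι → Bool) (B : Finset ι) (D : ℕ) (x : ι → Bool) : ℝ :=
  (if x = y then 1 else 0) +
    ∑ u ∈ B.powerset with #u ≤ D, correctorCoeff #B D #u * if x = patch y B u then 1 else 0

variable {y : ι → Bool} {B : Finset ι} {D : ℕ}

theorem sum_corrector_mul (g : (ι → Bool) → ℝ) :
    ∑ x, corrector y B D x * g x =
      g y + ∑ u ∈ B.powerset with #u ≤ D, correctorCoeff #B D #u * g (patch y B u) := by
  simp [corrector, add_mul, sum_add_distrib, sum_mul, sum_comm (s := univ)]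

theorem corrector_apply_self (hB : B ⊆ onesOf y) (hD : D < #B) : corrector y B D y = 1 := by
  rw [corrector, if_pos rfl, add_eq_left]
  refine sum_eq_zero fun u hu => ?_
  rw [if_neg (patch_ne_of_card_lt hB ((mem_filter.mp hu).2.trans_lt hD)).symm, mul_zero]

theorem corrector_ne_zero (hB : B ⊆ onesOf y) {x : ι → Bool} (hx : corrector y B D x ≠ 0) :
    (∀ c ∉ B, x c = y c) ∧ (x = y ∨ hw x + #B ≤ hw y + D) := by
  by_cases hxy : x = y
  · exact ⟨fun c _ => by rw [hxy], Or.inl hxy⟩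
  obtain ⟨u, hu, hxu⟩ : ∃ u ∈ B.powerset.filter (#· ≤ D), x = patch y B u := by
    by_contra! h
    refine hx ?_
    rw [corrector, if_neg hxy, zero_add]
    exact sum_eq_zero fun u hu => by rw [if_neg (h u hu), mul_zero]
  obtain ⟨huB, huD⟩ := by simpa using hu
  subst hxu
  refine ⟨fun c hc => by simp [patch, hc], Or.inr ?_⟩
  have := hw_patch_add_card hB huB
  omega

theorem sum_corrector_mul_indicator_eq_zero (hB : B ⊆ onesOf y) (hD : D < #B) {S : Finset ι}
    (hS : #S ≤ D) : ∑ x, corrector y B D x * (if S ⊆ onesOf x then 1 else 0) = 0 := by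
  have hSB : #(S ∩ B) ≤ D := (card_le_card inter_subset_left).trans hS
  have hpatch : ∀ u ∈ B.powerset.filter (#· ≤ D),
      (if S ⊆ onesOf (patch y B u) then (1 : ℝ) else 0) =
        if S ⊆ onesOf y ∧ S ∩ B ⊆ u then 1 else 0 := fun u hu =>
    if_congr (subset_onesOf_patch_iff hB (mem_powerset.mp (mem_filter.mp hu).1)) rfl rfl
  rw [sum_corrector_mul, sum_congr rfl fun u hu => by rw [hpatch u hu]]
  by_cases hSy : S ⊆ onesOf y
  · have := sum_superset_correctorCoeff inter_subset_right hSB hD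
    rw [← filter_filter, sum_filter] at this
    simp [hSy, this]
  · simp [hSy]

theorem lt_orthE_corrector (hB : B ⊆ onesOf y) (hD : D < #B) :
    (D : ℝ≥0∞) < orthE (corrector y B D) :=
  lt_orthE_of_forall_sum_mul_eq_zero fun _ hS => sum_corrector_mul_indicator_eq_zero hB hD hS

theorem sum_abs_corrector_le : ∑ x, |corrector y B D x| ≤ 1 + 2 ^ D * ((#B).choose D : ℝ) := by
  calc ∑ x, |corrector y B D x|
      ≤ ∑ x, (|if x = y then (1 : ℝ) else 0| + |∑ u ∈ B.powerset with #u ≤ D,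
          correctorCoeff #B D #u * if x = patch y B u then 1 else 0|) :=
        sum_le_sum fun x _ => abs_add_le _ _
    _ ≤ 1 + ∑ u ∈ B.powerset with #u ≤ D, |correctorCoeff #B D #u| := by
        rw [sum_add_distrib]
        gcongr
        · simp [apply_ite]
        · exact sum_abs_sum_mul_ite_eq_le _ _ _
    _ ≤ 1 + 2 ^ D * ((#B).choose D : ℝ) := by
        rw [sum_powerset_filter_card_le _ _ fun t => |correctorCoeff #B D t|]
        gcongr
        exact sum_choose_mul_abs_correctorCoeff_le _ _

end Corrector

section Blocks

variable {α β : Type*} [Fintype α] [Fintype β] [DecidableEq α]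

theorem hw_block_eq_card (x : α × β → Bool) (i : α) :
    hw (fun j => x (i, j)) = #{c ∈ onesOf x | c.1 = i} := by
  rw [hw, ← card_map ⟨(i, ·), Prod.mk_right_injective i⟩]
  congr 1
  ext ⟨a, b⟩
  simp only [mem_map, mem_filter, mem_univ, true_and, onesOf, Function.Embedding.coeFn_mk]
  constructor
  · rintro ⟨j, hj, hij⟩
    cases hij
    exact ⟨hj, rfl⟩
  · rintro ⟨hab, rfl⟩
    exact ⟨b, hab, rfl⟩

theorem hw_eq_hw_block_add_card (x : α × β → Bool) (i : α) :
    hw x = hw (fun j => x (i, j)) + #{c ∈ onesOf x | c.1 ≠ i} := by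
  rw [hw_block_eq_card]
  exact (card_filter_add_card_filter_not _).symm

theorem exists_lt_hw_block {x : α × β → Bool} {k : ℕ} (h : Fintype.card α * k < hw x) :
    ∃ i, k < hw (fun j => x (i, j)) := by
  have hsum : hw x = ∑ i, hw (fun j => x (i, j)) := by
    simp_rw [hw_block_eq_card]
    exact card_eq_sum_card_fiberwise fun _ _ => mem_univ _
  obtain ⟨i, -, hi⟩ := exists_lt_of_sum_lt (s := univ) (f := fun _ => k)
    (by simpa [hsum, mul_comm] using h)
  exact ⟨i, hi⟩

theorem card_filter_fst_ne_le (s : Finset (α × β)) (i : α) :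
    #{c ∈ s | c.1 ≠ i} ≤ Fintype.card β * (Fintype.card α - 1) := by
  calc #{c ∈ s | c.1 ≠ i} ≤ #((univ.erase i) ×ˢ (univ : Finset β)) :=
        card_le_card fun c hc => by simpa using (mem_filter.mp hc).2
    _ = Fintype.card β * (Fintype.card α - 1) := by
        rw [card_product, card_erase_of_mem (mem_univ i), mul_comm, card_univ, card_univ]

end Blocks

theorem corrector_for_blocks_general (n k θ D T : ℕ)
    (hTnD : n + D ≤ T) (hTθk : θ * k ≤ T)
    (y : Fin θ × Fin n → Bool) (hy : T < hw y) :
    ∃ ζ : (Fin θ × Fin n → Bool) → ℝ,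
      (∀ x, ζ x ≠ 0 → hw x ≤ T ∨ x = y) ∧
      ζ y = 1 ∧
      (D : ℝ≥0∞) < orthE ζ ∧
      (∑ x : Fin θ × Fin n → Bool, |ζ x|) ≤ 1 + 2 ^ D * ((n * (θ - 1)).choose D : ℝ) ∧
      (∀ x : Fin θ × Fin n → Bool,
        (∀ i : Fin θ, hw (fun j : Fin n => x (i, j)) ≤ k) → ζ x = 0) := by
  obtain ⟨i, hi⟩ := exists_lt_hw_block (x := y) (k := k) (by simpa using hTθk.trans_lt hy)
  set B := {c ∈ onesOf y | c.1 ≠ i}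
  have hBy : B ⊆ onesOf y := filter_subset _ _
  have hsplit : hw y = hw (fun j => y (i, j)) + #B := hw_eq_hw_block_add_card y i
  have hblock : hw (fun j => y (i, j)) ≤ n := (card_le_univ _).trans_eq (Fintype.card_fin n)
  have hD : D < #B := by omega
  have hB : #B ≤ n * (θ - 1) := by simpa using card_filter_fst_ne_le (onesOf y) i
  refine ⟨corrector y B D, fun x hx => ?_, corrector_apply_self hBy hD, lt_orthE_corrector hBy hD,
    sum_abs_corrector_le.trans (by gcongr), fun x hx => ?_⟩
  · rcases (corrector_ne_zero hBy hx).2 with h | h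
    · exact Or.inr h
    · exact Or.inl (by omega)
  · by_contra hne
    have hblock_eq : (fun j => x (i, j)) = fun j => y (i, j) :=
      funext fun j => (corrector_ne_zero hBy hne).1 _ (by simp [B])
    have := hx i
    rw [hblock_eq] at this
    omega

/-- Lemma 4.13 of the paper: a corrector object for block-structured inputs. -/
theorem corrector_for_blocks (n k θ D T : ℕ)
    (hn : 0 < n) (hk : 0 < k) (hθ : 0 < θ) (hD : 0 < D) (hT : 0 < T)
    (hTnD : n + D ≤ T) (hTθk : θ * k ≤ T)
    (y : Fin θ × Fin n → Bool) (hy : T < hw y) :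
    ∃ ζ : (Fin θ × Fin n → Bool) → ℝ,
      (∀ x, ζ x ≠ 0 → hw x ≤ T ∨ x = y) ∧
      ζ y = 1 ∧
      (D : ℝ≥0∞) < orthE ζ ∧
      (∑ x : Fin θ × Fin n → Bool, |ζ x|) ≤ 1 + 2 ^ D * ((n * (θ - 1)).choose D : ℝ) ∧
      (∀ x : Fin θ × Fin n → Bool,
        (∀ i : Fin θ, hw (fun j : Fin n => x (i, j)) ≤ k) → ζ x = 0) :=
  corrector_for_blocks_general n k θ D T hTnD hTθk y hy
end
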